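/- arXiv:2203.14862 — 5 statements merged into one kernel-verified Lean document; each statement's English description precedes it below -/
import Mathlib

section
/- Let $F:(0,\infty)\to\mathbb{R}$ be absolutely continuous on compact subintervals, let $f,g:(0,\infty)\to[0,\infty)$ with $f$ locally integrable and $g$ measurable, and suppose $F'(s) \le -F(s)^2 g(s) + f(s)$ for almost every $s$. Then for every $0 < t' < t$, $F(t) \le \int_{t'}^t f + \left(\int_{t'}^t g\right)^{-1}$. -/
open MeasureTheory Set

/- Gronwall-type lemma (Lemma 2.1 / techlem): if `F` is absolutely continuous on compact
subintervals of `(0,∞)` (encoded by the FTC with an a.e. derivative `F'`), `f, g ≥ 0` with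
`f` locally integrable and `g` measurable, and `F' ≤ -F² g + f` a.e., then for `0 < t' < t`,
`F t ≤ ∫_{t'}^t f + (∫_{t'}^t g)⁻¹`, with the convention `0⁻¹ = ∞` handled in `ℝ≥0∞`. -/
set_option maxHeartbeats 1600000 in
theorem stmt_0 (F F' f g : ℝ → ℝ)
    (hF'int : ∀ a b : ℝ, 0 < a → a ≤ b → IntervalIntegrable F' volume a b)
    (hFTC : ∀ a b : ℝ, 0 < a → a ≤ b → F b - F a = ∫ s in a..b, F' s)
    (hf0 : ∀ s, 0 ≤ f s) (hg0 : ∀ s, 0 ≤ g s)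
    (hfloc : ∀ a b : ℝ, 0 < a → a ≤ b → IntervalIntegrable f volume a b)
    (hgmeas : Measurable g)
    (hineq : ∀ᵐ s ∂volume, s ∈ Set.Ioi (0:ℝ) → F' s ≤ -(F s)^2 * g s + f s)
    (t' t : ℝ) (ht' : 0 < t') (ht : t' < t) :
    ENNReal.ofReal (F t) ≤ ENNReal.ofReal (∫ s in t'..t, f s)
      + (∫⁻ s in Set.Ioc t' t, ENNReal.ofReal (g s))⁻¹ := by
  set I : ℝ := ∫ s in t'..t, f s with hIdef
  have htle : t' ≤ t := ht.le
  have hI0 : 0 ≤ I := intervalIntegral.integral_nonneg htle (fun u _ => hf0 u)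
  by_cases hcase : F t ≤ I
  · exact (ENNReal.ofReal_le_ofReal hcase).trans le_self_add
  push_neg at hcase
  set M : ℝ := F t - I with hMdef
  have hM0 : 0 < M := sub_pos.2 hcase
  -- basic integrability on subintervals of [t', t]
  have hfint : ∀ a b : ℝ, t' ≤ a → a ≤ b → IntervalIntegrable f volume a b :=
    fun a b ha hab => hfloc a b (ht'.trans_le ha) hab
  have hF'int' : ∀ a b : ℝ, t' ≤ a → a ≤ b → IntervalIntegrable F' volume a b :=
    fun a b ha hab => hF'int a b (ht'.trans_le ha) hab
  -- the function φ
  set φ : ℝ → ℝ := fun s => F s + (I - ∫ u in t'..s, f u) with hφdef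
  have hφt : φ t = F t := by simp [hφdef, hIdef]
  -- FTC for φ
  have hφdiff : ∀ a b : ℝ, t' ≤ a → a ≤ b → φ a - φ b = ∫ s in a..b, (f s - F' s) := by
    intro a b ha hab
    have h1 : F b - F a = ∫ s in a..b, F' s := hFTC a b (ht'.trans_le ha) hab
    have h2 : (∫ u in t'..b, f u) - ∫ u in t'..a, f u = ∫ u in a..b, f u :=
      intervalIntegral.integral_interval_sub_left (hfint t' b le_rfl (ha.trans hab))
        (hfint t' a le_rfl ha)
    have h3 : ∫ s in a..b, (f s - F' s) = (∫ s in a..b, f s) - ∫ s in a..b, F' s :=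
      intervalIntegral.integral_sub (hfint a b ha hab) (hF'int' a b ha hab)
    rw [h3, ← h2]
    simp only [hφdef]
    linarith
  -- a.e. inequality on Icc t' t (conditional form)
  have hne : ∀ᵐ s : ℝ ∂volume, s ≠ t' := by
    rw [ae_iff]
    have h : {s : ℝ | ¬ s ≠ t'} = {t'} := by ext s; simp
    rw [h]
    exact measure_singleton t'
  have H : ∀ᵐ s : ℝ ∂volume, s ∈ Icc t' t → F' s ≤ -(F s)^2 * g s + f s := by
    filter_upwards [hineq, hne] with s h1 h2 hs
    exact h1 (lt_trans ht' (lt_of_le_of_ne hs.1 (Ne.symm h2)))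
  have Hres : ∀ a b : ℝ, t' ≤ a → b ≤ t →
      ∀ᵐ s ∂(volume.restrict (Icc a b)), F' s ≤ -(F s)^2 * g s + f s := by
    intro a b ha hb
    filter_upwards [ae_restrict_of_ae H,
      ae_restrict_mem (measurableSet_Icc : MeasurableSet (Icc a b))] with s h1 h2
    exact h1 ⟨ha.trans h2.1, h2.2.trans hb⟩
  -- φ is antitone on [t', t]
  have hmono : ∀ a b : ℝ, t' ≤ a → a ≤ b → b ≤ t → φ b ≤ φ a := by
    intro a b ha hab hb
    have h0 : 0 ≤ ∫ s in a..b, (f s - F' s) := by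
      apply intervalIntegral.integral_nonneg_of_ae_restrict hab
      refine (Hres a b ha hb).mono fun s hs => ?_
      simp only [Pi.zero_apply]
      nlinarith [mul_nonneg (sq_nonneg (F s)) (hg0 s)]
    have := hφdiff a b ha hab
    linarith
  -- lower bounds
  have hφlb : ∀ s ∈ Icc t' t, M + I ≤ φ s := by
    intro s hs
    have := hmono s t hs.1 hs.2 le_rfl
    rw [hφt] at this
    linarith
  have hFlb : ∀ s ∈ Icc t' t, φ s - I ≤ F s := by
    intro s hs
    have h0 : 0 ≤ ∫ u in t'..s, f u :=
      intervalIntegral.integral_nonneg hs.1 (fun u _ => hf0 u)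
    simp only [hφdef]
    linarith
  have hMF : ∀ s ∈ Icc t' t, M ≤ F s := by
    intro s hs
    have h1 := hφlb s hs
    have h2 := hFlb s hs
    linarith
  -- continuity of F and φ on Icc t' t
  have huIcc : uIcc t' t = Icc t' t := uIcc_of_le htle
  have hFprim : ContinuousOn (fun b => ∫ x in t'..b, F' x) (Icc t' t) := by
    have h := intervalIntegral.continuousOn_primitive_interval'
      (hF'int' t' t le_rfl htle) (by rw [huIcc]; exact ⟨le_rfl, htle⟩)
    rwa [huIcc] at h
  have hfprim : ContinuousOn (fun b => ∫ x in t'..b, f x) (Icc t' t) := by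
    have h := intervalIntegral.continuousOn_primitive_interval'
      (hfint t' t le_rfl htle) (by rw [huIcc]; exact ⟨le_rfl, htle⟩)
    rwa [huIcc] at h
  have hFcont : ContinuousOn F (Icc t' t) := by
    have h : ContinuousOn (fun s => F t' + ∫ x in t'..s, F' x) (Icc t' t) :=
      continuousOn_const.add hFprim
    apply h.congr
    intro s hs
    have := hFTC t' s ht' hs.1
    simp only
    linarith
  have hφcont : ContinuousOn φ (Icc t' t) := hFcont.add (continuousOn_const.sub hfprim)
  -- integrability of F² g on Ioc t' t
  have hFmeas : AEMeasurable F (volume.restrict (Ioc t' t)) :=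
    (hFcont.mono Ioc_subset_Icc_self).aemeasurable measurableSet_Ioc
  have hF2gmeas : AEStronglyMeasurable (fun s => (F s)^2 * g s) (volume.restrict (Ioc t' t)) :=
    ((hFmeas.pow_const 2).mul hgmeas.aemeasurable).aestronglyMeasurable
  have hdomint : IntegrableOn (fun s => f s - F' s) (Ioc t' t) volume := by
    have h1 : IntegrableOn f (Ioc t' t) volume :=
      (intervalIntegrable_iff_integrableOn_Ioc_of_le htle).1 (hfint t' t le_rfl htle)
    have h2 : IntegrableOn F' (Ioc t' t) volume :=
      (intervalIntegrable_iff_integrableOn_Ioc_of_le htle).1 (hF'int' t' t le_rfl htle)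
    exact h1.sub h2
  have HresIoc : ∀ᵐ s ∂(volume.restrict (Ioc t' t)), F' s ≤ -(F s)^2 * g s + f s := by
    filter_upwards [ae_restrict_of_ae H,
      ae_restrict_mem (measurableSet_Ioc : MeasurableSet (Ioc t' t))] with s h1 h2
    exact h1 ⟨h2.1.le, h2.2⟩
  have hF2gint : IntegrableOn (fun s => (F s)^2 * g s) (Ioc t' t) volume := by
    apply Integrable.mono' hdomint hF2gmeas
    filter_upwards [HresIoc] with s hs
    have h1 : 0 ≤ (F s)^2 * g s := mul_nonneg (sq_nonneg _) (hg0 s)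
    rw [Real.norm_eq_abs, abs_of_nonneg h1]
    linarith
  -- integrability of g on Ioc t' t
  have hgint : IntegrableOn g (Ioc t' t) volume := by
    apply Integrable.mono' ((hF2gint.const_mul (M⁻¹^2)))
      (hgmeas.aestronglyMeasurable.restrict)
    filter_upwards [ae_restrict_mem (measurableSet_Ioc : MeasurableSet (Ioc t' t))] with s hs
    have hMs : M ≤ F s := hMF s (Ioc_subset_Icc_self hs)
    rw [Real.norm_eq_abs, abs_of_nonneg (hg0 s)]
    rw [← mul_assoc]
    have h2 : (1:ℝ) ≤ M⁻¹^2 * (F s)^2 := by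
      rw [← mul_pow]
      have : (1:ℝ) ≤ M⁻¹ * F s := by
        rw [inv_mul_eq_div, le_div_iff₀ hM0]
        linarith
      nlinarith
    nlinarith [hg0 s]
  have hgiv : ∀ a b : ℝ, t' ≤ a → a ≤ b → b ≤ t → IntervalIntegrable g volume a b := by
    intro a b ha hab hb
    rw [intervalIntegrable_iff_integrableOn_Ioc_of_le hab]
    exact hgint.mono_set (Ioc_subset_Ioc ha hb)
  have hF2giv : ∀ a b : ℝ, t' ≤ a → a ≤ b → b ≤ t →
      IntervalIntegrable (fun s => (F s)^2 * g s) volume a b := by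
    intro a b ha hab hb
    rw [intervalIntegrable_iff_integrableOn_Ioc_of_le hab]
    exact hF2gint.mono_set (Ioc_subset_Ioc ha hb)
  -- the function ψ
  set ψ : ℝ → ℝ := fun s => (φ s - I)⁻¹ with hψdef
  have hφIpos : ∀ s ∈ Icc t' t, M ≤ φ s - I := by
    intro s hs
    have := hφlb s hs
    linarith
  -- the key step estimate
  have hstep : ∀ a b : ℝ, t' ≤ a → a ≤ b → b ≤ t →
      (φ b - I) / (φ a - I) * ∫ s in a..b, g s ≤ ψ b - ψ a := by
    intro a b ha hab hb
    have haIcc : a ∈ Icc t' t := ⟨ha, hab.trans hb⟩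
    have hbIcc : b ∈ Icc t' t := ⟨ha.trans hab, hb⟩
    have hua : 0 < φ a - I := lt_of_lt_of_le hM0 (hφIpos a haIcc)
    have hub : 0 < φ b - I := lt_of_lt_of_le hM0 (hφIpos b hbIcc)
    have h1 : ∫ s in a..b, (φ b - I)^2 * g s ≤ ∫ s in a..b, (F s)^2 * g s := by
      apply intervalIntegral.integral_mono_on hab
        ((hgiv a b ha hab hb).const_mul _) (hF2giv a b ha hab hb)
      intro s hs
      have hsIcc : s ∈ Icc t' t := ⟨ha.trans hs.1, hs.2.trans hb⟩
      have hφs : φ b ≤ φ s := hmono s b (ha.trans hs.1) hs.2 hb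
      have hFs : φ s - I ≤ F s := hFlb s hsIcc
      have : φ b - I ≤ F s := by linarith
      have h2 : (φ b - I)^2 ≤ (F s)^2 := by nlinarith
      exact mul_le_mul_of_nonneg_right h2 (hg0 s)
    have h2 : ∫ s in a..b, (F s)^2 * g s ≤ ∫ s in a..b, (f s - F' s) := by
      apply intervalIntegral.integral_mono_ae_restrict hab (hF2giv a b ha hab hb)
        ((hfint a b ha hab).sub (hF'int' a b ha hab))
      filter_upwards [Hres a b ha hb] with s hs
      linarith
    have h3 : (φ b - I)^2 * ∫ s in a..b, g s ≤ φ a - φ b := by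
      rw [hφdiff a b ha hab]
      calc (φ b - I)^2 * ∫ s in a..b, g s = ∫ s in a..b, (φ b - I)^2 * g s := by
            rw [intervalIntegral.integral_const_mul]
        _ ≤ ∫ s in a..b, (F s)^2 * g s := h1
        _ ≤ ∫ s in a..b, (f s - F' s) := h2
    have hψeq : ψ b - ψ a = (φ a - φ b) / ((φ b - I) * (φ a - I)) := by
      simp only [hψdef]
      rw [inv_sub_inv hub.ne' hua.ne']
      ring_nf
    rw [hψeq, div_mul_eq_mul_div, div_le_div_iff₀ hua (mul_pos hub hua)]
    have hJ0 : 0 ≤ ∫ s in a..b, g s :=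
      intervalIntegral.integral_nonneg hab (fun u _ => hg0 u)
    nlinarith [mul_le_mul_of_nonneg_left h3 hua.le, mul_le_mul_of_nonneg_left h3 hub.le]
  -- uniform continuity of φ
  have hφuc := (isCompact_Icc.uniformContinuousOn_of_continuous hφcont)
  rw [Metric.uniformContinuousOn_iff] at hφuc
  -- the ε-claim
  set J : ℝ := ∫ s in t'..t, g s with hJdef
  have hJ0 : 0 ≤ J := intervalIntegral.integral_nonneg htle (fun u _ => hg0 u)
  have hkey : ∀ ε : ℝ, 0 < ε → ε < 1 → (1 - ε) * J ≤ M⁻¹ := by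
    intro ε hε hε1
    obtain ⟨δ, hδ0, hδ⟩ := hφuc (ε * M) (mul_pos hε hM0)
    obtain ⟨n, hn⟩ := exists_nat_gt ((t - t') / δ)
    have hn0 : 0 < (n:ℝ) := lt_of_le_of_lt (div_nonneg (by linarith) hδ0.le) hn
    have hnn : 0 < n := Nat.cast_pos.1 hn0
    set c : ℝ := (t - t') / n with hcdef
    have hc0 : 0 < c := div_pos (by linarith) hn0
    have hcδ : c < δ := by
      rw [div_lt_iff₀ hδ0] at hn
      rw [hcdef, div_lt_iff₀ hn0]
      nlinarith
    set p : ℕ → ℝ := fun i => t' + i * c with hpdef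
    have hp0 : p 0 = t' := by simp [hpdef]
    have hpn : p n = t := by
      simp only [hpdef, hcdef]
      field_simp
      ring
    have hpmono : ∀ i j : ℕ, i ≤ j → p i ≤ p j := by
      intro i j hij
      simp only [hpdef]
      have : (i:ℝ) ≤ j := Nat.cast_le.2 hij
      nlinarith
    have hpmem : ∀ i : ℕ, i ≤ n → p i ∈ Icc t' t := by
      intro i hi
      constructor
      · rw [← hp0]; exact hpmono 0 i (Nat.zero_le i)
      · rw [← hpn]; exact hpmono i n hi
    have hsucc' : ∀ i : ℕ, p (i+1) - p i = c := by
      intro i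
      simp only [hpdef]
      push_cast
      ring
    -- per-interval estimate
    have hper : ∀ i : ℕ, i < n → (1 - ε) * ∫ s in p i..p (i+1), g s ≤ ψ (p (i+1)) - ψ (p i) := by
      intro i hi
      have hiIcc := hpmem i hi.le
      have hi1Icc := hpmem (i+1) hi
      have hple : p i ≤ p (i+1) := hpmono i (i+1) (Nat.le_succ i)
      have hdist : dist (p i) (p (i+1)) < δ := by
        rw [Real.dist_eq, abs_sub_comm, hsucc' i, abs_of_nonneg hc0.le]
        exact hcδ
      have hφd : |φ (p i) - φ (p (i+1))| < ε * M := by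
        have := hδ (p i) hiIcc (p (i+1)) hi1Icc hdist
        rwa [Real.dist_eq] at this
      have hua : M ≤ φ (p i) - I := hφIpos _ hiIcc
      have hφlt : φ (p i) - φ (p (i+1)) < ε * M := (abs_lt.1 hφd).2
      have hφge : φ (p (i+1)) ≤ φ (p i) := hmono _ _ hiIcc.1 hple hi1Icc.2
      have hfac : 1 - ε ≤ (φ (p (i+1)) - I) / (φ (p i) - I) := by
        rw [le_div_iff₀ (by linarith)]
        nlinarith
      have hJi : 0 ≤ ∫ s in p i..p (i+1), g s :=
        intervalIntegral.integral_nonneg hple (fun u _ => hg0 u)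
      calc (1 - ε) * ∫ s in p i..p (i+1), g s
          ≤ (φ (p (i+1)) - I) / (φ (p i) - I) * ∫ s in p i..p (i+1), g s :=
            mul_le_mul_of_nonneg_right hfac hJi
        _ ≤ ψ (p (i+1)) - ψ (p i) := hstep _ _ hiIcc.1 hple hi1Icc.2
    -- sum up
    have hsum : ∑ i ∈ Finset.range n, ∫ s in p i..p (i+1), g s = J := by
      rw [intervalIntegral.sum_integral_adjacent_intervals, hp0, hpn]
      intro k hk
      exact hgiv (p k) (p (k+1)) (hpmem k hk.le).1 (hpmono k (k+1) (Nat.le_succ k))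
        (hpmem (k+1) hk).2
    have htel : ∑ i ∈ Finset.range n, (ψ (p (i+1)) - ψ (p i)) = ψ t - ψ t' := by
      rw [Finset.sum_range_sub (fun i => ψ (p i)), hp0, hpn]
    have hsum_le : (1 - ε) * J ≤ ψ t - ψ t' := by
      rw [← hsum, ← htel, Finset.mul_sum]
      exact Finset.sum_le_sum (fun i hi => hper i (Finset.mem_range.1 hi))
    have hψt : ψ t = M⁻¹ := by simp [hψdef, hφt, hMdef]
    have hψt' : 0 ≤ ψ t' := by
      have := hφIpos t' ⟨le_rfl, htle⟩
      simp only [hψdef]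
      exact inv_nonneg.2 (by linarith)
    rw [hψt] at hsum_le
    linarith
  -- deduce J ≤ M⁻¹
  have hJM : J ≤ M⁻¹ := by
    by_contra hcon
    push_neg at hcon
    have hMi0 : 0 < M⁻¹ := inv_pos.2 hM0
    have hJpos : 0 < J := lt_trans hMi0 hcon
    have hε : (0:ℝ) < (J - M⁻¹) / (2 * J) := div_pos (by linarith) (by linarith)
    have hε1 : (J - M⁻¹) / (2 * J) < 1 := by
      rw [div_lt_one (by linarith)]
      linarith
    have hk := hkey _ hε hε1
    have hεJ : ((J - M⁻¹) / (2 * J)) * J = (J - M⁻¹) / 2 := by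
      field_simp
    rw [sub_mul, one_mul, hεJ] at hk
    linarith
  -- finish in ℝ≥0∞
  have hlint : ∫⁻ s in Ioc t' t, ENNReal.ofReal (g s) = ENNReal.ofReal J := by
    rw [hJdef, intervalIntegral.integral_of_le htle]
    exact (ofReal_integral_eq_lintegral_ofReal hgint
      (Filter.Eventually.of_forall (fun s => hg0 s))).symm
  rw [hlint]
  rcases eq_or_lt_of_le hJ0 with hJeq | hJpos
  · rw [← hJeq]
    simp
  · have hMJ : M ≤ J⁻¹ := by
      rw [← one_div, le_div_iff₀ hJpos]
      have h1 : J * M ≤ M⁻¹ * M := mul_le_mul_of_nonneg_right hJM hM0.le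
      rw [inv_mul_cancel₀ hM0.ne'] at h1
      linarith [h1]
    have hFt : F t = I + M := by rw [hMdef]; ring
    rw [hFt, ENNReal.ofReal_add hI0 hM0.le, ← ENNReal.ofReal_inv_of_pos hJpos]
    exact add_le_add le_rfl (ENNReal.ofReal_le_ofReal hMJ)
end

section
/- Let $H$ be a Hilbert space, $h,y:(0,\infty)\to H$ square integrable, $\langle h,y\rangle$ absolutely continuous, and $f:(0,\infty)\to[0,\infty)$ integrable, with $(d/dt)\langle h,y\rangle \le -|y|^2 + f$ almost everywhere. Then for every $0 < t' < t$ one has $\langle h,y\rangle(t) \le \int_{t'}^t f + (t-t')^{-2}\int_{t'}^t |h|^2$, and moreover $\int_t^{\infty}|y|^2 \le \int_{t'}^{\infty} f + (t-t')^{-2}\int_{t'}^{t}|h|^2$. -/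
open MeasureTheory Set
open scoped RealInnerProductSpace ENNReal


private lemma swap_aux {a b : ℝ} (hab : a ≤ b) {φ ψ : ℝ → ℝ}
    (hφ : IntegrableOn φ (Ioc a b)) (hψ : IntegrableOn ψ (Ioc a b)) :
    ∫ x in Ioc a b, φ x * ∫ s in Ioc x b, ψ s
      = ∫ s in Ioc a b, (∫ x in Ioc a s, φ x) * ψ s := by
  set μ := volume.restrict (Ioc a b) with hμ
  have hmeas : MeasurableSet {p : ℝ × ℝ | p.1 < p.2} :=
    measurableSet_lt measurable_fst measurable_snd
  have hint : Integrable ({p : ℝ × ℝ | p.1 < p.2}.indicator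
      (fun p => φ p.1 * ψ p.2)) (μ.prod μ) :=
    (hφ.mul_prod hψ).indicator hmeas
  have key := integral_integral_swap (f := fun x s =>
      {p : ℝ × ℝ | p.1 < p.2}.indicator (fun p => φ p.1 * ψ p.2) (x, s))
      (μ := μ) (ν := μ) hint
  have h1 : (∫ x, (∫ s, {p : ℝ × ℝ | p.1 < p.2}.indicator
      (fun p => φ p.1 * ψ p.2) (x, s) ∂μ) ∂μ) = ∫ x in Ioc a b, φ x * ∫ s in Ioc x b, ψ s := by
    rw [hμ]
    refine setIntegral_congr_fun measurableSet_Ioc (fun x hx => ?_)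
    have e1 : (fun s => {p : ℝ × ℝ | p.1 < p.2}.indicator (fun p => φ p.1 * ψ p.2) (x, s))
        = (Ioi x).indicator (fun s => φ x * ψ s) := by
      funext s; simp [Set.indicator_apply, Set.mem_Ioi, Set.mem_setOf_eq]
    rw [e1, integral_indicator measurableSet_Ioi,
      Measure.restrict_restrict measurableSet_Ioi]
    have e2 : Ioi x ∩ Ioc a b = Ioc x b := by
      ext z
      simp only [mem_inter_iff, mem_Ioi, mem_Ioc]
      exact ⟨fun ⟨h1, _, h3⟩ => ⟨h1, h3⟩, fun ⟨h1, h2⟩ => ⟨h1, hx.1.trans h1, h2⟩⟩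
    rw [e2, MeasureTheory.integral_const_mul]
  have h2 : (∫ s, (∫ x, {p : ℝ × ℝ | p.1 < p.2}.indicator
      (fun p => φ p.1 * ψ p.2) (x, s) ∂μ) ∂μ) = ∫ s in Ioc a b, (∫ x in Ioc a s, φ x) * ψ s := by
    rw [hμ]
    refine setIntegral_congr_fun measurableSet_Ioc (fun s hs => ?_)
    have e1 : (fun x => {p : ℝ × ℝ | p.1 < p.2}.indicator (fun p => φ p.1 * ψ p.2) (x, s))
        = (Iio s).indicator (fun x => φ x * ψ s) := by
      funext x; simp [Set.indicator_apply, Set.mem_Iio, Set.mem_setOf_eq]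
    rw [e1, integral_indicator measurableSet_Iio,
      Measure.restrict_restrict measurableSet_Iio]
    have e2 : Iio s ∩ Ioc a b = Ioo a s := by
      ext z
      simp only [mem_inter_iff, mem_Iio, mem_Ioc, mem_Ioo]
      exact ⟨fun ⟨h1, h2, _⟩ => ⟨h2, h1⟩, fun ⟨h1, h2⟩ => ⟨h2, h1, (le_of_lt h2).trans hs.2⟩⟩
    rw [e2, MeasureTheory.integral_mul_const, ← integral_Ioc_eq_integral_Ioo]
  rw [← h1, ← h2]
  exact key


theorem stmt_1 {H : Type*} [NormedAddCommGroup H] [InnerProductSpace ℝ H]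
    (h y : ℝ → H) (f F' : ℝ → ℝ)
    (hh : MemLp h 2 (volume.restrict (Set.Ioi 0)))
    (hy : MemLp y 2 (volume.restrict (Set.Ioi 0)))
    (hf : IntegrableOn f (Set.Ioi 0) volume) (hf0 : ∀ s, 0 ≤ f s)
    (hF'int : ∀ a b : ℝ, 0 < a → a ≤ b → IntervalIntegrable F' volume a b)
    (hFTC : ∀ a b : ℝ, 0 < a → a ≤ b →
      ⟪h b, y b⟫ - ⟪h a, y a⟫ = ∫ s in a..b, F' s)
    (hineq : ∀ᵐ s ∂volume, s ∈ Set.Ioi (0:ℝ) → F' s ≤ -‖y s‖^2 + f s)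
    (t' t : ℝ) (ht' : 0 < t') (ht : t' < t) :
    ⟪h t, y t⟫ ≤ (∫ s in t'..t, f s) + ((t - t')^2)⁻¹ * ∫ s in t'..t, ‖h s‖^2
    ∧ ∫ s in Set.Ioi t, ‖y s‖^2
        ≤ (∫ s in Set.Ioi t', f s) + ((t - t')^2)⁻¹ * ∫ s in t'..t, ‖h s‖^2 := by
  have htt : (0:ℝ) < t - t' := sub_pos.2 ht
  have ht0 : (0:ℝ) < t := ht'.trans ht
  set g : ℝ → ℝ := fun s => ⟪h s, y s⟫ with hg_def
  have hgapp : ∀ s, g s = ⟪h s, y s⟫ := fun s => rfl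
  -- basic integrability
  have hH2 : IntegrableOn (fun s => ‖h s‖^2) (Ioi 0) := hh.norm.integrable_sq
  have hY2 : IntegrableOn (fun s => ‖y s‖^2) (Ioi 0) := hy.norm.integrable_sq
  have hgm : AEStronglyMeasurable g (volume.restrict (Ioi 0)) := hh.1.inner hy.1
  have hgi : IntegrableOn g (Ioi 0) := by
    refine Integrable.mono' (hH2.add hY2) hgm (ae_of_all _ fun s => ?_)
    have h1 : |g s| ≤ ‖h s‖ * ‖y s‖ := abs_real_inner_le_norm _ _
    rw [Real.norm_eq_abs]
    simp only [Pi.add_apply]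
    nlinarith [sq_nonneg (‖h s‖ - ‖y s‖), norm_nonneg (h s), norm_nonneg (y s)]
  have hsub : ∀ {a b : ℝ}, 0 < a → Ioc a b ⊆ Ioi 0 := fun ha x hx => ha.trans hx.1
  have hfI : ∀ a b : ℝ, 0 < a → a ≤ b → IntervalIntegrable f volume a b := by
    intro a b ha hab
    rw [intervalIntegrable_iff_integrableOn_Ioc_of_le hab]
    exact hf.mono_set (hsub ha)
  have hy2I : ∀ a b : ℝ, 0 < a → a ≤ b →
      IntervalIntegrable (fun s => ‖y s‖^2) volume a b := by
    intro a b ha hab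
    rw [intervalIntegrable_iff_integrableOn_Ioc_of_le hab]
    exact hY2.mono_set (hsub ha)
  -- step: for all positive a ≤ b : g b ≤ g a - ∫_{Ioc a b} ‖y‖² + ∫_a^b f
  have hstep : ∀ a b : ℝ, 0 < a → a ≤ b →
      g b ≤ g a - (∫ s in Ioc a b, ‖y s‖^2) + ∫ s in a..b, f s := by
    intro a b ha hab
    have hFTCab : g b - g a = ∫ s in a..b, F' s := hFTC a b ha hab
    have hmono : (∫ s in a..b, F' s) ≤ ∫ s in a..b, (-‖y s‖^2 + f s) := by
      refine intervalIntegral.integral_mono_ae_restrict hab (hF'int a b ha hab)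
        (((hy2I a b ha hab).neg).add (hfI a b ha hab)) ?_
      have h1 : ∀ᵐ s ∂(volume.restrict (Icc a b)),
          s ∈ Ioi (0:ℝ) → F' s ≤ -‖y s‖^2 + f s := ae_restrict_of_ae hineq
      filter_upwards [h1, ae_restrict_mem measurableSet_Icc] with s hs1 hs2
      exact hs1 (ha.trans_le hs2.1)
    have heq : (∫ s in a..b, (-‖y s‖^2 + f s))
        = (∫ s in a..b, f s) - ∫ s in a..b, ‖y s‖^2 := by
      rw [intervalIntegral.integral_congr (g := fun s => f s - ‖y s‖^2)
          (fun s _ => by ring),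
        intervalIntegral.integral_sub (hfI a b ha hab) (hy2I a b ha hab)]
    have hYa : (∫ s in a..b, ‖y s‖^2) = ∫ s in Ioc a b, ‖y s‖^2 :=
      intervalIntegral.integral_of_le hab
    rw [heq, hYa] at hmono
    linarith
  -- weight function
  set w : ℝ → ℝ := fun x => 2*(x - t') / (t - t')^2 with hw_def
  set Wf : ℝ → ℝ := fun x => (x - t')^2 / (t - t')^2 with hWf_def
  set Y : ℝ → ℝ := fun a => ∫ s in Ioc a t, ‖y s‖^2 with hY_def
  have hw_cont : Continuous w := by
    rw [hw_def]; fun_prop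
  have hWf_cont : Continuous Wf := by
    rw [hWf_def]; fun_prop
  have hWderiv : ∀ x : ℝ, HasDerivAt Wf (w x) x := by
    intro x
    have h1 : HasDerivAt (fun x : ℝ => (x - t')^2) (2*(x - t')) x := by
      have := ((hasDerivAt_id x).sub_const t').pow 2
      simpa [mul_comm, Pi.pow_def] using this
    have := h1.div_const ((t - t')^2)
    simpa [hWf_def, hw_def] using this
  have hWint : ∀ s ∈ Icc t' t, (∫ x in Ioc t' s, w x) = Wf s := by
    intro s hs
    have he := intervalIntegral.integral_eq_sub_of_hasDerivAt (f := Wf) (f' := w)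
      (a := t') (b := s) (fun x _ => hWderiv x) (hw_cont.intervalIntegrable _ _)
    rw [intervalIntegral.integral_of_le hs.1] at he
    rw [he, hWf_def]
    simp
  have hWone : (∫ x in Ioc t' t, w x) = 1 := by
    rw [hWint t ⟨le_of_lt ht, le_refl t⟩, hWf_def]
    exact div_self (pow_ne_zero _ htt.ne')
  have hsub' : Ioc t' t ⊆ Ioi 0 := hsub ht'
  -- Part 1
  have part1 : g t ≤ (∫ s in t'..t, f s) + ((t - t')^2)⁻¹ * ∫ s in t'..t, ‖h s‖^2 := by
    set Fv : ℝ := ∫ s in t'..t, f s with hFv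
    have hpt : ∀ a ∈ Ioc t' t, w a * g t ≤
        Wf a * ‖y a‖^2 + ((t - t')^2)⁻¹ * ‖h a‖^2 - w a * Y a + w a * Fv := by
      intro a ha
      have ha0 : (0:ℝ) ≤ a - t' := le_of_lt (sub_pos.2 ha.1)
      have hw0 : 0 ≤ w a := by rw [hw_def]; positivity
      have h1 := hstep a t (ht'.trans ha.1) ha.2
      have hff : (∫ s in a..t, f s) ≤ Fv := by
        rw [hFv]
        exact intervalIntegral.integral_mono_interval (le_of_lt ha.1) ha.2 le_rfl
          (ae_of_all _ hf0) (hfI t' t ht' (le_of_lt ht))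
      have h1' : g t ≤ g a - Y a + Fv := by rw [hY_def]; linarith
      have h2 : g a ≤ ‖h a‖ * ‖y a‖ := real_inner_le_norm _ _
      have h3 : w a * (‖h a‖ * ‖y a‖) ≤ Wf a * ‖y a‖^2 + ((t - t')^2)⁻¹ * ‖h a‖^2 := by
        have key : 2*(a - t') * (‖h a‖ * ‖y a‖) ≤ (a - t')^2 * ‖y a‖^2 + ‖h a‖^2 := by
          nlinarith [sq_nonneg ((a - t') * ‖y a‖ - ‖h a‖)]
        have hmul := mul_le_mul_of_nonneg_right key
          (le_of_lt (inv_pos.2 (by positivity : (0:ℝ) < (t - t')^2)))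
        calc w a * (‖h a‖ * ‖y a‖)
            = 2*(a - t') * (‖h a‖ * ‖y a‖) * ((t - t')^2)⁻¹ := by rw [hw_def]; ring
          _ ≤ ((a - t')^2 * ‖y a‖^2 + ‖h a‖^2) * ((t - t')^2)⁻¹ := hmul
          _ = Wf a * ‖y a‖^2 + ((t - t')^2)⁻¹ * ‖h a‖^2 := by rw [hWf_def]; ring
      have h4 : w a * g a ≤ w a * (‖h a‖ * ‖y a‖) := mul_le_mul_of_nonneg_left h2 hw0
      have h5 : w a * g t ≤ w a * (g a - Y a + Fv) := mul_le_mul_of_nonneg_left h1' hw0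
      have e : w a * (g a - Y a + Fv) = w a * g a - w a * Y a + w a * Fv := by ring
      linarith
    have iH2 : IntegrableOn (fun s => ‖h s‖^2) (Ioc t' t) := hH2.mono_set hsub'
    have iY2 : IntegrableOn (fun s => ‖y s‖^2) (Ioc t' t) := hY2.mono_set hsub'
    have hYanti : AntitoneOn Y (Icc t' t) := by
      intro u hu v hv huv
      simp only [hY_def]
      exact setIntegral_mono_set (hY2.mono_set (hsub (ht'.trans_le hu.1)))
        (ae_of_all _ fun s => sq_nonneg _) ((Ioc_subset_Ioc_left huv).eventuallyLE)
    have iY : IntegrableOn Y (Ioc t' t) :=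
      (AntitoneOn.integrableOn_isCompact isCompact_Icc hYanti).mono_set Ioc_subset_Icc_self
    have iwY : IntegrableOn (fun a => w a * Y a) (Ioc t' t) := by
      refine iY.bdd_mul (c := 2*(t - t')/(t - t')^2) hw_cont.aestronglyMeasurable ?_
      filter_upwards [ae_restrict_mem measurableSet_Ioc] with a ha
      have ha0 : (0:ℝ) ≤ a - t' := le_of_lt (sub_pos.2 ha.1)
      rw [hw_def, Real.norm_eq_abs, abs_of_nonneg (by positivity)]
      rw [div_le_div_iff₀ (by positivity) (by positivity)]
      nlinarith [mul_nonneg (sub_nonneg.2 ha.2) (sq_nonneg (t - t'))]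
    have iWy2 : IntegrableOn (fun a => Wf a * ‖y a‖^2) (Ioc t' t) := by
      refine iY2.bdd_mul (c := 1) hWf_cont.aestronglyMeasurable ?_
      filter_upwards [ae_restrict_mem measurableSet_Ioc] with a ha
      have ha0 : (0:ℝ) ≤ a - t' := le_of_lt (sub_pos.2 ha.1)
      rw [hWf_def, Real.norm_eq_abs, abs_of_nonneg (by positivity)]
      rw [div_le_one (by positivity)]
      nlinarith [ha.1, ha.2]
    have ich2 : IntegrableOn (fun a => ((t - t')^2)⁻¹ * ‖h a‖^2) (Ioc t' t) :=
      iH2.const_mul _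
    have iwF : IntegrableOn (fun a => w a * Fv) (Ioc t' t) :=
      (hw_cont.integrableOn_Ioc).mul_const _
    have iwg : IntegrableOn (fun a => w a * g t) (Ioc t' t) :=
      (hw_cont.integrableOn_Ioc).mul_const _
    have iA : IntegrableOn (fun a => Wf a * ‖y a‖^2 + ((t - t')^2)⁻¹ * ‖h a‖^2)
        (Ioc t' t) := by exact iWy2.add ich2
    have iB : IntegrableOn
        (fun a => Wf a * ‖y a‖^2 + ((t - t')^2)⁻¹ * ‖h a‖^2 - w a * Y a)
        (Ioc t' t) := by exact iA.sub iwY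
    have iC : IntegrableOn
        (fun a => Wf a * ‖y a‖^2 + ((t - t')^2)⁻¹ * ‖h a‖^2 - w a * Y a + w a * Fv)
        (Ioc t' t) := by exact iB.add iwF
    have hInt := setIntegral_mono_on iwg iC measurableSet_Ioc hpt
    have hL : (∫ a in Ioc t' t, w a * g t) = g t := by
      rw [MeasureTheory.integral_mul_const, hWone, one_mul]
    have hR : (∫ a in Ioc t' t,
          (Wf a * ‖y a‖^2 + ((t - t')^2)⁻¹ * ‖h a‖^2 - w a * Y a + w a * Fv))
        = (∫ a in Ioc t' t, Wf a * ‖y a‖^2)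
          + ((t - t')^2)⁻¹ * (∫ a in Ioc t' t, ‖h a‖^2)
          - (∫ a in Ioc t' t, w a * Y a) + Fv := by
      rw [integral_add iB iwF, integral_sub iA iwY,
        integral_add iWy2 ich2, MeasureTheory.integral_const_mul,
        MeasureTheory.integral_mul_const, hWone, one_mul]
    have hswap : (∫ a in Ioc t' t, w a * Y a) = ∫ a in Ioc t' t, Wf a * ‖y a‖^2 := by
      simp only [hY_def]
      rw [swap_aux (le_of_lt ht) hw_cont.integrableOn_Ioc iY2]
      exact setIntegral_congr_fun measurableSet_Ioc fun s hs => by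
        rw [hWint s (Ioc_subset_Icc_self hs)]
    rw [hL, hR, hswap] at hInt
    have hh2 : (∫ s in t'..t, ‖h s‖^2) = ∫ s in Ioc t' t, ‖h s‖^2 :=
      intervalIntegral.integral_of_le (le_of_lt ht)
    rw [hh2]
    linarith
  refine ⟨part1, ?_⟩
  -- Part 2
  have hyIt : IntegrableOn (fun s => ‖y s‖^2) (Ioi t) :=
    hY2.mono_set (Ioi_subset_Ioi (le_of_lt ht0))
  have hfIoi : ∀ u : ℝ, 0 < u → IntegrableOn f (Ioi u) := fun u hu =>
    hf.mono_set (Ioi_subset_Ioi (le_of_lt hu))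
  have hfT : ∀ T, t ≤ T → (∫ s in t..T, f s) ≤ ∫ s in Ioi t, f s := by
    intro T hT
    rw [intervalIntegral.integral_of_le hT]
    exact setIntegral_mono_set (hfIoi t ht0) (ae_of_all _ hf0)
      (Ioc_subset_Ioi_self.eventuallyLE)
  have hbound : ∀ T, t ≤ T → (∫ s in Ioc t T, ‖y s‖^2) ≤ g t - g T + ∫ s in Ioi t, f s := by
    intro T hT
    have h1 := hstep t T ht0 hT
    have h2 := hfT T hT
    linarith
  have hglim : ∀ ε : ℝ, 0 < ε → ∀ X : ℝ, ∃ T, X ≤ T ∧ t ≤ T ∧ -ε ≤ g T := by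
    intro ε hε X
    by_contra hcon
    push_neg at hcon
    set M := max X t with hM
    have hgi' : IntegrableOn g (Ioi M) :=
      hgi.mono_set (Ioi_subset_Ioi (le_trans (le_of_lt ht0) (le_max_right X t)))
    have hconst : IntegrableOn (fun _ : ℝ => ε) (Ioi M) := by
      refine Integrable.mono' hgi'.norm aestronglyMeasurable_const ?_
      filter_upwards [ae_restrict_mem measurableSet_Ioi] with s hs
      have hs1 : X ≤ s := le_of_lt (lt_of_le_of_lt (le_max_left X t) hs)
      have hs2 : t ≤ s := le_of_lt (lt_of_le_of_lt (le_max_right X t) hs)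
      have h2 := hcon s hs1 hs2
      rw [Real.norm_eq_abs, abs_of_pos hε]
      calc ε ≤ -(g s) := by linarith
        _ ≤ |g s| := neg_le_abs _
        _ = ‖g s‖ := (Real.norm_eq_abs _).symm
    rcases (integrableOn_const_iff (C := ε) (by simp)).1 hconst with h1 | h2
    · exact absurd (enorm_eq_zero.1 h1) hε.ne'
    · rw [Real.volume_Ioi] at h2
      exact absurd h2 (lt_irrefl _)
  have hmain2 : (∫ s in Ioi t, ‖y s‖^2) ≤ g t + ∫ s in Ioi t, f s := by
    by_contra hcon
    push_neg at hcon
    set L : ℝ := ∫ s in Ioi t, ‖y s‖^2 with hLd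
    set R : ℝ := g t + ∫ s in Ioi t, f s with hRd
    have htend : Filter.Tendsto (fun T => ∫ s in t..T, ‖y s‖^2) Filter.atTop (nhds L) :=
      intervalIntegral_tendsto_integral_Ioi t hyIt Filter.tendsto_id
    have hev : ∀ᶠ T in Filter.atTop, R + (L - R)/2 < ∫ s in t..T, ‖y s‖^2 :=
      htend.eventually (eventually_gt_nhds (by linarith))
    rcases Filter.eventually_atTop.1 hev with ⟨X, hX⟩
    obtain ⟨T, hT1, hT2, hT3⟩ := hglim ((L - R)/2) (by linarith) X
    have h1 := hX T hT1
    have h2 := hbound T hT2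
    rw [intervalIntegral.integral_of_le hT2] at h1
    rw [hRd] at *
    linarith
  have hsplit : (∫ s in Ioi t', f s) = (∫ s in Ioc t' t, f s) + ∫ s in Ioi t, f s := by
    have hdisj : Disjoint (Ioc t' t) (Ioi t) := by
      rw [Set.disjoint_left]
      intro x hx hx'
      exact absurd hx.2 (not_le.2 hx')
    rw [← Ioc_union_Ioi_eq_Ioi (le_of_lt ht),
      setIntegral_union hdisj measurableSet_Ioi (hf.mono_set hsub') (hfIoi t ht0)]
  have hfeq : (∫ s in t'..t, f s) = ∫ s in Ioc t' t, f s :=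
    intervalIntegral.integral_of_le (le_of_lt ht)
  linarith
end

section
/- Let $H$ be a Hilbert space, $t\in\mathbb{R}$, and $x:(t,\infty)\to H$ measurable. Set $C_1 = \int_t^\infty |x|^2$ and $C_2 = \sup_{\tau>0} \tau^{-1}\int_t^\infty |x(s+\tau)-x(s)|^2\,ds$, both assumed finite. Then $\int_t^\infty |x|^4 \le \left(\frac{2}{2^{1/4}-1}\right)^2 C_1 C_2$. -/
open MeasureTheory Set Filter
open scoped ENNReal Topology

lemma shift_Ioc (h : ℝ → ℝ≥0∞) (c a b : ℝ) :
    ∫⁻ u in Ioc a b, h (u + c) = ∫⁻ v in Ioc (a + c) (b + c), h v := by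
  have hmp : MeasurePreserving (fun u : ℝ => u + c) volume volume :=
    measurePreserving_add_right volume c
  have hemb : MeasurableEmbedding (fun u : ℝ => u + c) :=
    (MeasurableEquiv.addRight c).measurableEmbedding
  have := hmp.setLIntegral_comp_preimage_emb hemb h (Ioc (a + c) (b + c))
  have hpre : (fun u : ℝ => u + c) ⁻¹' Ioc (a + c) (b + c) = Ioc a b := by
    ext u
    simp only [Set.mem_preimage, Set.mem_Ioc]
    constructor <;> rintro ⟨h1, h2⟩ <;> constructor <;> linarith
  rwa [hpre] at this

lemma shift_Ioi (h : ℝ → ℝ≥0∞) (c a : ℝ) :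
    ∫⁻ u in Ioi a, h (u + c) = ∫⁻ v in Ioi (a + c), h v := by
  have hmp : MeasurePreserving (fun u : ℝ => u + c) volume volume :=
    measurePreserving_add_right volume c
  have hemb : MeasurableEmbedding (fun u : ℝ => u + c) :=
    (MeasurableEquiv.addRight c).measurableEmbedding
  have := hmp.setLIntegral_comp_preimage_emb hemb h (Ioi (a + c))
  have hpre : (fun u : ℝ => u + c) ⁻¹' Ioi (a + c) = Ioi a := by
    ext u
    simp only [Set.mem_preimage, Set.mem_Ioi]
    constructor <;> intro h1 <;> linarith
  rwa [hpre] at this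

lemma cauchy_schwarz_lintegral {μ : Measure ℝ} (f : ℝ → ℝ≥0∞) (hf : AEMeasurable f μ) :
    (∫⁻ u, f u ∂μ) ^ 2 ≤ μ Set.univ * ∫⁻ u, (f u) ^ 2 ∂μ := by
  have hconj : Real.HolderConjugate 2 2 := by constructor <;> norm_num
  have H := ENNReal.lintegral_mul_le_Lp_mul_Lq μ hconj hf aemeasurable_const (g := fun _ => 1)
  simp only [Pi.mul_apply, mul_one, ENNReal.one_rpow, lintegral_one] at H
  set A := ∫⁻ a, f a ^ (2:ℝ) ∂μ with hA
  have h1 : (∫⁻ u, f u ∂μ) ^ 2 ≤ (A ^ ((1:ℝ)/2) * (μ Set.univ) ^ ((1:ℝ)/2)) ^ 2 :=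
    pow_le_pow_left₀ zero_le H 2
  have h2 : (A ^ ((1:ℝ)/2) * (μ Set.univ) ^ ((1:ℝ)/2)) ^ 2 = A * μ Set.univ := by
    rw [mul_pow, ← ENNReal.rpow_natCast (A ^ ((1:ℝ)/2)) 2,
      ← ENNReal.rpow_natCast ((μ Set.univ) ^ ((1:ℝ)/2)) 2, ← ENNReal.rpow_mul,
      ← ENNReal.rpow_mul]
    norm_num
  have h3 : A = ∫⁻ u, (f u) ^ 2 ∂μ := by
    apply lintegral_congr
    intro u
    rw [← ENNReal.rpow_natCast (f u) 2]
    norm_num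
  rw [h2, h3, mul_comm] at h1
  exact h1

open MeasureTheory Set Filter
open scoped ENNReal

lemma toReal_sub_abs_le {a b c : ℝ≥0∞} (hab : a ≤ b + c) (hba : b ≤ a + c)
    (ha : a ≠ ∞) (hb : b ≠ ∞) (hc : c ≠ ∞) : |a.toReal - b.toReal| ≤ c.toReal := by
  rw [abs_sub_le_iff]
  constructor
  · have := ENNReal.toReal_mono (by finiteness) hab
    rw [ENNReal.toReal_add hb hc] at this
    linarith
  · have := ENNReal.toReal_mono (by finiteness) hba
    rw [ENNReal.toReal_add ha hc] at this
    linarith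

lemma l4_of_sup_l2 {μ : Measure ℝ} {h : ℝ → ℝ} {M B : ℝ} (hM : 0 ≤ M)
    (hsup : ∀ᵐ s ∂μ, (h s)^2 ≤ M)
    (hL2 : ∫⁻ s, ENNReal.ofReal ((h s)^2) ∂μ ≤ ENNReal.ofReal B) :
    ∫⁻ s, ENNReal.ofReal ((h s)^4) ∂μ ≤ ENNReal.ofReal (M * B) := by
  have step : ∫⁻ s, ENNReal.ofReal ((h s)^4) ∂μ
      ≤ ∫⁻ s, ENNReal.ofReal M * ENNReal.ofReal ((h s)^2) ∂μ := by
    apply lintegral_mono_ae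
    filter_upwards [hsup] with s hs
    have : (h s)^4 = (h s)^2 * (h s)^2 := by ring
    rw [this, ENNReal.ofReal_mul (sq_nonneg _)]
    exact mul_le_mul_left (ENNReal.ofReal_le_ofReal hs) _
  calc ∫⁻ s, ENNReal.ofReal ((h s)^4) ∂μ
      ≤ ∫⁻ s, ENNReal.ofReal M * ENNReal.ofReal ((h s)^2) ∂μ := step
    _ = ENNReal.ofReal M * ∫⁻ s, ENNReal.ofReal ((h s)^2) ∂μ :=
        lintegral_const_mul' _ _ ENNReal.ofReal_ne_top
    _ ≤ ENNReal.ofReal M * ENNReal.ofReal B := mul_le_mul_right hL2 _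
    _ = ENNReal.ofReal (M * B) := (ENNReal.ofReal_mul hM).symm

lemma eLpNorm_four_eq {μ : Measure ℝ} (h : ℝ → ℝ) :
    eLpNorm h 4 μ = (∫⁻ s, ENNReal.ofReal ((h s)^4) ∂μ) ^ ((1:ℝ)/4) := by
  rw [eLpNorm_eq_lintegral_rpow_enorm_toReal (by norm_num) (by norm_num)]
  rw [ENNReal.toReal_ofNat]
  congr 1
  apply lintegral_congr
  intro s
  rw [Real.enorm_eq_ofReal_abs, show ((4:ℝ)) = ((4:ℕ):ℝ) by norm_num,
    ENNReal.rpow_natCast, ← ENNReal.ofReal_pow (abs_nonneg _), pow_abs]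
  congr 1
  exact abs_of_nonneg (by positivity)

lemma eLpNorm_four_le {μ : Measure ℝ} {h : ℝ → ℝ} {m : ℝ} (hm : 0 ≤ m)
    (hL : ∫⁻ s, ENNReal.ofReal ((h s)^4) ∂μ ≤ ENNReal.ofReal (m^4)) :
    eLpNorm h 4 μ ≤ ENNReal.ofReal m := by
  rw [eLpNorm_four_eq]
  calc (∫⁻ s, ENNReal.ofReal ((h s)^4) ∂μ) ^ ((1:ℝ)/4)
      ≤ (ENNReal.ofReal (m^4)) ^ ((1:ℝ)/4) :=
        ENNReal.rpow_le_rpow hL (by norm_num)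
    _ = ENNReal.ofReal m := by
        rw [ENNReal.ofReal_pow hm, ← ENNReal.rpow_natCast (ENNReal.ofReal m) 4,
          ← ENNReal.rpow_mul]
        norm_num

lemma lintegral_four_le_of_eLpNorm {μ : Measure ℝ} {h : ℝ → ℝ} {m : ℝ} (hm : 0 ≤ m)
    (hE : eLpNorm h 4 μ ≤ ENNReal.ofReal m) :
    ∫⁻ s, ENNReal.ofReal ((h s)^4) ∂μ ≤ ENNReal.ofReal (m^4) := by
  have h1 : (eLpNorm h 4 μ) ^ ((4:ℝ)) ≤ (ENNReal.ofReal m) ^ ((4:ℝ)) :=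
    ENNReal.rpow_le_rpow hE (by norm_num)
  rw [eLpNorm_four_eq, ← ENNReal.rpow_mul] at h1
  norm_num at h1
  rw [ENNReal.ofReal_pow hm]
  calc ∫⁻ s, ENNReal.ofReal ((h s)^4) ∂μ ≤ (ENNReal.ofReal m) ^ (4:ℕ) := by
        rw [← ENNReal.rpow_natCast (ENNReal.ofReal m) 4]
        convert h1 using 2
        norm_num
    _ = _ := rfl

open MeasureTheory Set Filter
open scoped ENNReal

noncomputable def Iav (F : ℝ → ℝ) (δ s : ℝ) : ℝ≥0∞ :=
  ∫⁻ u in Ioc (0:ℝ) δ, ENNReal.ofReal (F (s + u))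

noncomputable def gav (F : ℝ → ℝ) (δ s : ℝ) : ℝ := (Iav F δ s).toReal / δ

lemma Iav_measurable {F : ℝ → ℝ} (hF : Measurable F) (δ : ℝ) : Measurable (Iav F δ) :=
  Measurable.lintegral_prod_right
    ((hF.comp (measurable_fst.add measurable_snd)).ennreal_ofReal)

lemma gav_measurable {F : ℝ → ℝ} (hF : Measurable F) (δ : ℝ) : Measurable (gav F δ) :=
  ((Iav_measurable hF δ).ennreal_toReal).div_const δ

-- slice bounds
lemma slice_sq {F : ℝ → ℝ} {t s δ : ℝ} (hs : t ≤ s) :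
    ∫⁻ u in Ioc (0:ℝ) δ, (ENNReal.ofReal (F (s + u)))^2
      ≤ ∫⁻ v in Ioi t, (ENNReal.ofReal (F v))^2 := by
  have e1 : ∫⁻ u in Ioc (0:ℝ) δ, (ENNReal.ofReal (F (s + u)))^2
      = ∫⁻ u in Ioc (0:ℝ) δ, (fun v => (ENNReal.ofReal (F v))^2) (u + s) := by
    apply lintegral_congr; intro u; simp [add_comm]
  rw [e1, shift_Ioc (fun v => (ENNReal.ofReal (F v))^2) s 0 δ]
  apply lintegral_mono_set
  intro v hv
  simp only [Set.mem_Ioc, Set.mem_Ioi] at *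
  linarith [hv.1]

lemma slice_diff {F : ℝ → ℝ} {t s δ c : ℝ} (hs : t ≤ s)
    (H : ∫⁻ v in Ioi t, ENNReal.ofReal ((F (v + c) - F v)^2) ≤ ENNReal.ofReal (C2 * c)) :
    ∫⁻ u in Ioc (0:ℝ) δ, ENNReal.ofReal ((F (s + u + c) - F (s + u))^2)
      ≤ ENNReal.ofReal (C2 * c) := by
  have e1 : ∫⁻ u in Ioc (0:ℝ) δ, ENNReal.ofReal ((F (s + u + c) - F (s + u))^2)
      = ∫⁻ u in Ioc (0:ℝ) δ, (fun v => ENNReal.ofReal ((F (v + c) - F v)^2)) (u + s) := by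
    apply lintegral_congr; intro u; simp [add_comm s u]
  rw [e1, shift_Ioc (fun v => ENNReal.ofReal ((F (v + c) - F v)^2)) s 0 δ]
  refine le_trans ?_ H
  apply lintegral_mono_set
  intro v hv
  simp only [Set.mem_Ioc, Set.mem_Ioi] at *
  linarith [hv.1]

lemma tonelli_slice_sq {F : ℝ → ℝ} {t u C1 : ℝ} (hu : 0 ≤ u)
    (h1 : ∫⁻ v in Ioi t, (ENNReal.ofReal (F v))^2 = ENNReal.ofReal C1) :
    ∫⁻ s in Ioi t, (ENNReal.ofReal (F (s + u)))^2 ≤ ENNReal.ofReal C1 := by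
  rw [shift_Ioi (fun v => (ENNReal.ofReal (F v))^2) u t, ← h1]
  apply lintegral_mono_set
  intro v hv
  simp only [Set.mem_Ioi] at *
  linarith

lemma tonelli_slice_diff {F : ℝ → ℝ} {t u c C2 : ℝ} (hu : 0 ≤ u)
    (H : ∫⁻ v in Ioi t, ENNReal.ofReal ((F (v + c) - F v)^2) ≤ ENNReal.ofReal (C2 * c)) :
    ∫⁻ s in Ioi t, ENNReal.ofReal ((F (s + u + c) - F (s + u))^2) ≤ ENNReal.ofReal (C2 * c) := by
  rw [shift_Ioi (fun v => ENNReal.ofReal ((F (v + c) - F v)^2)) u t]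
  refine le_trans ?_ H
  apply lintegral_mono_set
  intro v hv
  simp only [Set.mem_Ioi] at *
  linarith
-- Hölder for Iav
lemma Iav_sq_le {F : ℝ → ℝ} (hF : Measurable F) (δ s : ℝ) :
    (Iav F δ s)^2 ≤ ENNReal.ofReal δ * ∫⁻ u in Ioc (0:ℝ) δ, (ENNReal.ofReal (F (s + u)))^2 := by
  have := cauchy_schwarz_lintegral (μ := volume.restrict (Ioc (0:ℝ) δ))
    (fun u => ENNReal.ofReal (F (s + u)))
    ((hF.comp (measurable_const.add measurable_id)).ennreal_ofReal).aemeasurable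
  simp only [Measure.restrict_apply, MeasurableSet.univ, Set.univ_inter, Real.volume_Ioc,
    sub_zero] at this
  exact this

lemma Iav_sq_le' {F : ℝ → ℝ} {t C1 : ℝ} (hF : Measurable F) {δ s : ℝ} (hs : t ≤ s)
    (h1 : ∫⁻ v in Ioi t, (ENNReal.ofReal (F v))^2 = ENNReal.ofReal C1) :
    (Iav F δ s)^2 ≤ ENNReal.ofReal δ * ENNReal.ofReal C1 :=
  le_trans (Iav_sq_le hF δ s) (mul_le_mul_right (le_of_le_of_eq (slice_sq hs) h1) _)

lemma Iav_ne_top {F : ℝ → ℝ} {t C1 : ℝ} (hF : Measurable F) {δ s : ℝ} (hs : t ≤ s)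
    (h1 : ∫⁻ v in Ioi t, (ENNReal.ofReal (F v))^2 = ENNReal.ofReal C1) :
    Iav F δ s ≠ ∞ := by
  intro h
  have := Iav_sq_le' hF hs h1 (δ := δ)
  rw [h] at this
  simp [ENNReal.top_pow] at this
  exact (ENNReal.mul_ne_top ENNReal.ofReal_ne_top ENNReal.ofReal_ne_top) this

-- pointwise sup bound on gav
lemma gav_sq_le {F : ℝ → ℝ} {t C1 : ℝ} (hF : Measurable F) {δ s : ℝ} (hδ : 0 < δ) (hs : t ≤ s)
    (h1 : ∫⁻ v in Ioi t, (ENNReal.ofReal (F v))^2 = ENNReal.ofReal C1) (hC1 : 0 ≤ C1) :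
    (gav F δ s)^2 ≤ C1 / δ := by
  have hfin : Iav F δ s ≠ ∞ := Iav_ne_top hF hs h1
  have h2 : ((Iav F δ s)^2).toReal ≤ δ * C1 := by
    have := ENNReal.toReal_mono (by finiteness) (Iav_sq_le' hF hs h1 (δ := δ))
    rwa [ENNReal.toReal_mul, ENNReal.toReal_ofReal hδ.le, ENNReal.toReal_ofReal hC1] at this
  rw [ENNReal.toReal_pow] at h2
  unfold gav
  rw [div_pow, div_le_div_iff₀ (by positivity) hδ]
  nlinarith [hδ]
-- pointwise key for L² of gav
lemma gav_sq_mul_le {F : ℝ → ℝ} (hF : Measurable F) (hF0 : ∀ v, 0 ≤ F v) {δ : ℝ} (hδ : 0 < δ)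
    (s : ℝ) :
    ENNReal.ofReal ((gav F δ s)^2) * ENNReal.ofReal δ
      ≤ ∫⁻ u in Ioc (0:ℝ) δ, (ENNReal.ofReal (F (s + u)))^2 := by
  set J := ∫⁻ u in Ioc (0:ℝ) δ, (ENNReal.ofReal (F (s + u)))^2 with hJ
  rcases eq_or_ne J ∞ with h | h
  · rw [h]; exact le_top
  have ha2 : (Iav F δ s)^2 ≤ ENNReal.ofReal δ * J := Iav_sq_le hF δ s
  have hfin : Iav F δ s ≠ ∞ := by
    intro htop
    rw [htop] at ha2
    simp [ENNReal.top_pow] at ha2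
    exact (ENNReal.mul_ne_top ENNReal.ofReal_ne_top h) ha2
  have h2 : (Iav F δ s).toReal^2 ≤ δ * J.toReal := by
    have := ENNReal.toReal_mono (by finiteness) ha2
    rwa [ENNReal.toReal_mul, ENNReal.toReal_ofReal hδ.le, ENNReal.toReal_pow] at this
  have hg2 : (gav F δ s)^2 * δ ≤ J.toReal := by
    unfold gav
    rw [div_pow]
    rw [div_mul_eq_mul_div, div_le_iff₀ (by positivity)]
    nlinarith [hδ]
  calc ENNReal.ofReal ((gav F δ s)^2) * ENNReal.ofReal δ
      = ENNReal.ofReal ((gav F δ s)^2 * δ) := (ENNReal.ofReal_mul (sq_nonneg _)).symm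
    _ ≤ ENNReal.ofReal J.toReal := ENNReal.ofReal_le_ofReal hg2
    _ = J := ENNReal.ofReal_toReal h

-- Tonelli swap bound
lemma tonelli_sq {F : ℝ → ℝ} {t C1 : ℝ} (hF : Measurable F) {δ : ℝ} (hδ : 0 < δ)
    (h1 : ∫⁻ v in Ioi t, (ENNReal.ofReal (F v))^2 = ENNReal.ofReal C1) :
    ∫⁻ s in Ioi t, (∫⁻ u in Ioc (0:ℝ) δ, (ENNReal.ofReal (F (s + u)))^2)
      ≤ ENNReal.ofReal C1 * ENNReal.ofReal δ := by
  rw [lintegral_lintegral_swap]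
  · calc ∫⁻ u in Ioc (0:ℝ) δ, ∫⁻ s in Ioi t, (ENNReal.ofReal (F (s + u)))^2
        ≤ ∫⁻ u in Ioc (0:ℝ) δ, ENNReal.ofReal C1 := by
          apply lintegral_mono_ae
          rw [ae_restrict_iff' measurableSet_Ioc]
          filter_upwards with u hu
          exact tonelli_slice_sq hu.1.le h1
      _ = ENNReal.ofReal C1 * ENNReal.ofReal δ := by
          rw [setLIntegral_const, Real.volume_Ioc, sub_zero]
  · apply AEMeasurable.pow_const
    exact ((hF.comp (measurable_fst.add measurable_snd)).ennreal_ofReal).aemeasurable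

-- L² bound for gav
lemma gav_L2 {F : ℝ → ℝ} {t C1 : ℝ} (hF : Measurable F) (hF0 : ∀ v, 0 ≤ F v) {δ : ℝ}
    (hδ : 0 < δ) (h1 : ∫⁻ v in Ioi t, (ENNReal.ofReal (F v))^2 = ENNReal.ofReal C1) :
    ∫⁻ s in Ioi t, ENNReal.ofReal ((gav F δ s)^2) ≤ ENNReal.ofReal C1 := by
  refine (ENNReal.mul_le_mul_iff_left (ENNReal.ofReal_pos.mpr hδ).ne' ENNReal.ofReal_ne_top).mp ?_
  calc (∫⁻ s in Ioi t, ENNReal.ofReal ((gav F δ s)^2)) * ENNReal.ofReal δ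
      = ∫⁻ s in Ioi t, ENNReal.ofReal ((gav F δ s)^2) * ENNReal.ofReal δ :=
        (lintegral_mul_const' _ _ ENNReal.ofReal_ne_top).symm
    _ ≤ ∫⁻ s in Ioi t, (∫⁻ u in Ioc (0:ℝ) δ, (ENNReal.ofReal (F (s + u)))^2) :=
        lintegral_mono fun s => gav_sq_mul_le hF hF0 hδ s
    _ ≤ ENNReal.ofReal C1 * ENNReal.ofReal δ := tonelli_sq hF hδ h1
noncomputable def Jsh (F : ℝ → ℝ) (δ s : ℝ) : ℝ≥0∞ :=
  ∫⁻ u in Ioc (0:ℝ) δ, ENNReal.ofReal (F (s + u + δ))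

noncomputable def Kab (F : ℝ → ℝ) (δ s : ℝ) : ℝ≥0∞ :=
  ∫⁻ u in Ioc (0:ℝ) δ, ENNReal.ofReal |F (s + u + δ) - F (s + u)|

lemma Iav_decomp {F : ℝ → ℝ} {δ : ℝ} (hδ : 0 < δ) (s : ℝ) :
    Iav F (2*δ) s = Iav F δ s + Jsh F δ s := by
  unfold Iav Jsh
  have hsplit : Ioc (0:ℝ) (2*δ) = Ioc 0 δ ∪ Ioc δ (2*δ) :=
    (Set.Ioc_union_Ioc_eq_Ioc (by linarith) (by linarith)).symm
  rw [hsplit, lintegral_union measurableSet_Ioc (Set.Ioc_disjoint_Ioc_of_le le_rfl)]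
  congr 1
  have e : (∫⁻ u in Ioc (0:ℝ) δ, ENNReal.ofReal (F (s + u + δ)))
      = ∫⁻ u in Ioc (0:ℝ) δ, (fun v => ENNReal.ofReal (F (s + v))) (u + δ) :=
    lintegral_congr fun u => by rw [add_assoc]
  rw [show (2:ℝ)*δ = δ + δ by ring, e, shift_Ioc (fun v => ENNReal.ofReal (F (s + v))) δ 0 δ,
    zero_add]

lemma Jsh_ne_top {F : ℝ → ℝ} {t C1 : ℝ} (hF : Measurable F) {δ s : ℝ} (hδ : 0 < δ) (hs : t ≤ s)
    (h1 : ∫⁻ v in Ioi t, (ENNReal.ofReal (F v))^2 = ENNReal.ofReal C1) : Jsh F δ s ≠ ∞ := by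
  have h := Iav_decomp (F := F) hδ s
  have hle : Jsh F δ s ≤ Iav F (2*δ) s := by rw [h]; exact le_add_self
  exact ne_top_of_le_ne_top (Iav_ne_top hF hs h1) hle

lemma Kab_le {F : ℝ → ℝ} (hF : Measurable F) (hF0 : ∀ v, 0 ≤ F v) (δ s : ℝ) :
    Kab F δ s ≤ Jsh F δ s + Iav F δ s := by
  unfold Kab Jsh Iav
  have hm : Measurable fun u : ℝ => ENNReal.ofReal (F (s + u + δ)) := by fun_prop
  rw [← lintegral_add_left hm]
  apply lintegral_mono
  intro u
  dsimp only
  rw [← ENNReal.ofReal_add (hF0 _) (hF0 _)]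
  apply ENNReal.ofReal_le_ofReal
  calc |F (s + u + δ) - F (s + u)| ≤ |F (s + u + δ)| + |F (s + u)| := abs_sub _ _
    _ = F (s + u + δ) + F (s + u) := by rw [abs_of_nonneg (hF0 _), abs_of_nonneg (hF0 _)]

lemma Kab_ne_top {F : ℝ → ℝ} {t C1 : ℝ} (hF : Measurable F) (hF0 : ∀ v, 0 ≤ F v) {δ s : ℝ}
    (hδ : 0 < δ) (hs : t ≤ s)
    (h1 : ∫⁻ v in Ioi t, (ENNReal.ofReal (F v))^2 = ENNReal.ofReal C1) : Kab F δ s ≠ ∞ :=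
  ne_top_of_le_ne_top (ENNReal.add_ne_top.mpr ⟨Jsh_ne_top hF hδ hs h1, Iav_ne_top hF hs h1⟩)
    (Kab_le hF hF0 δ s)

-- relations Iav ≤ Jsh + Kab and Jsh ≤ Iav + Kab
lemma Iav_le_Jsh_add_Kab {F : ℝ → ℝ} (hF : Measurable F) (hF0 : ∀ v, 0 ≤ F v) (δ s : ℝ) :
    Iav F δ s ≤ Jsh F δ s + Kab F δ s := by
  unfold Kab Jsh Iav
  have hm : Measurable fun u : ℝ => ENNReal.ofReal (F (s + u + δ)) := by fun_prop
  rw [← lintegral_add_left hm]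
  apply lintegral_mono
  intro u
  dsimp only
  rw [← ENNReal.ofReal_add (hF0 _) (abs_nonneg _)]
  apply ENNReal.ofReal_le_ofReal
  have : F (s + u) - F (s + u + δ) ≤ |F (s + u + δ) - F (s + u)| := by
    rw [abs_sub_comm]; exact le_abs_self _
  linarith

lemma Jsh_le_Iav_add_Kab {F : ℝ → ℝ} (hF : Measurable F) (hF0 : ∀ v, 0 ≤ F v) (δ s : ℝ) :
    Jsh F δ s ≤ Iav F δ s + Kab F δ s := by
  unfold Kab Jsh Iav
  have hm : Measurable fun u : ℝ => ENNReal.ofReal (F (s + u)) := by fun_prop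
  rw [← lintegral_add_left hm]
  apply lintegral_mono
  intro u
  dsimp only
  rw [← ENNReal.ofReal_add (hF0 _) (abs_nonneg _)]
  apply ENNReal.ofReal_le_ofReal
  have : F (s + u + δ) - F (s + u) ≤ |F (s + u + δ) - F (s + u)| := le_abs_self _
  linarith

-- Cauchy-Schwarz for Kab
lemma Kab_sq_le {F : ℝ → ℝ} (hF : Measurable F) (δ s : ℝ) :
    (Kab F δ s)^2 ≤ ENNReal.ofReal δ *
      ∫⁻ u in Ioc (0:ℝ) δ, ENNReal.ofReal ((F (s + u + δ) - F (s + u))^2) := by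
  have hm : AEMeasurable (fun u : ℝ => ENNReal.ofReal |F (s + u + δ) - F (s + u)|)
      (volume.restrict (Ioc (0:ℝ) δ)) := by
    apply Measurable.aemeasurable
    apply Measurable.ennreal_ofReal
    apply Measurable.abs
    exact (hF.comp (by fun_prop)).sub (hF.comp (by fun_prop))
  have := cauchy_schwarz_lintegral (μ := volume.restrict (Ioc (0:ℝ) δ)) _ hm
  simp only [Measure.restrict_apply, MeasurableSet.univ, Set.univ_inter, Real.volume_Ioc,
    sub_zero] at this
  refine this.trans (le_of_eq ?_)
  congr 1
  apply lintegral_congr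
  intro u
  rw [← ENNReal.ofReal_pow (abs_nonneg _), sq_abs]
lemma piece_repr {F : ℝ → ℝ} {t C1 : ℝ} (hF : Measurable F) {δ s : ℝ} (hδ : 0 < δ) (hs : t ≤ s)
    (h1 : ∫⁻ v in Ioi t, (ENNReal.ofReal (F v))^2 = ENNReal.ofReal C1) :
    gav F δ s - gav F (2*δ) s = ((Iav F δ s).toReal - (Jsh F δ s).toReal) / (2*δ) := by
  have hI : Iav F δ s ≠ ∞ := Iav_ne_top hF hs h1
  have hJ : Jsh F δ s ≠ ∞ := Jsh_ne_top hF hδ hs h1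
  have hd := Iav_decomp (F := F) hδ s
  unfold gav
  rw [hd, ENNReal.toReal_add hI hJ]
  field_simp
  ring

lemma piece_abs_le {F : ℝ → ℝ} {t C1 : ℝ} (hF : Measurable F) (hF0 : ∀ v, 0 ≤ F v)
    {δ s : ℝ} (hδ : 0 < δ) (hs : t ≤ s)
    (h1 : ∫⁻ v in Ioi t, (ENNReal.ofReal (F v))^2 = ENNReal.ofReal C1) :
    |gav F δ s - gav F (2*δ) s| ≤ (Kab F δ s).toReal / (2*δ) := by
  rw [piece_repr hF hδ hs h1, abs_div, abs_of_pos (by linarith : (0:ℝ) < 2*δ)]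
  have key : |(Iav F δ s).toReal - (Jsh F δ s).toReal| ≤ (Kab F δ s).toReal :=
    toReal_sub_abs_le (Iav_le_Jsh_add_Kab hF hF0 δ s) (Jsh_le_Iav_add_Kab hF hF0 δ s)
      (Iav_ne_top hF hs h1) (Jsh_ne_top hF hδ hs h1) (Kab_ne_top hF hF0 hδ hs h1)
  exact (div_le_div_iff_of_pos_right (by linarith)).mpr key

-- sup bound for pieces
lemma piece_sq_le {F : ℝ → ℝ} {t C1 C2 : ℝ} (hF : Measurable F) (hF0 : ∀ v, 0 ≤ F v)
    {δ s : ℝ} (hδ : 0 < δ) (hs : t ≤ s) (hC2 : 0 ≤ C2)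
    (h1 : ∫⁻ v in Ioi t, (ENNReal.ofReal (F v))^2 = ENNReal.ofReal C1)
    (h2δ : ∫⁻ v in Ioi t, ENNReal.ofReal ((F (v + δ) - F v)^2) ≤ ENNReal.ofReal (C2 * δ)) :
    (gav F δ s - gav F (2*δ) s)^2 ≤ C2 / 4 := by
  have hK : Kab F δ s ≠ ∞ := Kab_ne_top hF hF0 hδ hs h1
  have hKsq : (Kab F δ s)^2 ≤ ENNReal.ofReal δ * ENNReal.ofReal (C2 * δ) :=
    (Kab_sq_le hF δ s).trans (mul_le_mul_right (slice_diff hs h2δ) _)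
  have hKr : (Kab F δ s).toReal^2 ≤ δ * (C2 * δ) := by
    have := ENNReal.toReal_mono (by finiteness) hKsq
    rwa [ENNReal.toReal_mul, ENNReal.toReal_ofReal hδ.le,
      ENNReal.toReal_ofReal (by positivity), ENNReal.toReal_pow] at this
  have habs := piece_abs_le hF hF0 hδ hs h1
  have h0 : (gav F δ s - gav F (2*δ) s)^2 ≤ ((Kab F δ s).toReal / (2*δ))^2 := by
    rw [← sq_abs]
    exact pow_le_pow_left₀ (abs_nonneg _) habs 2
  refine h0.trans ?_
  rw [div_pow]
  rw [div_le_div_iff₀ (by positivity) (by norm_num)]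
  nlinarith [hδ]
-- pointwise key for piece L²
lemma piece_sq_mul_le {F : ℝ → ℝ} {t C1 : ℝ} (hF : Measurable F) (hF0 : ∀ v, 0 ≤ F v)
    {δ s : ℝ} (hδ : 0 < δ) (hs : t ≤ s)
    (h1 : ∫⁻ v in Ioi t, (ENNReal.ofReal (F v))^2 = ENNReal.ofReal C1) :
    ENNReal.ofReal ((gav F δ s - gav F (2*δ) s)^2) * ENNReal.ofReal (4*δ^2)
      ≤ ENNReal.ofReal δ *
        ∫⁻ u in Ioc (0:ℝ) δ, ENNReal.ofReal ((F (s + u + δ) - F (s + u))^2) := by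
  have hK : Kab F δ s ≠ ∞ := Kab_ne_top hF hF0 hδ hs h1
  have habs := piece_abs_le hF hF0 hδ hs h1
  have h0 : (gav F δ s - gav F (2*δ) s)^2 * (4*δ^2) ≤ (Kab F δ s).toReal^2 := by
    have h0' : (gav F δ s - gav F (2*δ) s)^2 ≤ ((Kab F δ s).toReal / (2*δ))^2 := by
      rw [← sq_abs]
      exact pow_le_pow_left₀ (abs_nonneg _) habs 2
    rw [div_pow] at h0'
    have : (2*δ)^2 = 4*δ^2 := by ring
    rw [this] at h0'
    have h4 : (0:ℝ) < 4*δ^2 := by positivity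
    calc (gav F δ s - gav F (2*δ) s)^2 * (4*δ^2)
        ≤ ((Kab F δ s).toReal^2 / (4*δ^2)) * (4*δ^2) := by
          exact mul_le_mul_of_nonneg_right h0' h4.le
      _ = (Kab F δ s).toReal^2 := by field_simp
  calc ENNReal.ofReal ((gav F δ s - gav F (2*δ) s)^2) * ENNReal.ofReal (4*δ^2)
      = ENNReal.ofReal ((gav F δ s - gav F (2*δ) s)^2 * (4*δ^2)) :=
        (ENNReal.ofReal_mul (sq_nonneg _)).symm
    _ ≤ ENNReal.ofReal ((Kab F δ s).toReal^2) := ENNReal.ofReal_le_ofReal h0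
    _ = (Kab F δ s)^2 := by
        rw [← ENNReal.toReal_pow, ENNReal.ofReal_toReal (ENNReal.pow_ne_top hK)]
    _ ≤ _ := Kab_sq_le hF δ s

-- Tonelli for the difference integral
lemma tonelli_diff {F : ℝ → ℝ} {t C2 : ℝ} (hF : Measurable F) {δ : ℝ} (hδ : 0 < δ)
    (h2δ : ∫⁻ v in Ioi t, ENNReal.ofReal ((F (v + δ) - F v)^2) ≤ ENNReal.ofReal (C2 * δ)) :
    ∫⁻ s in Ioi t, (∫⁻ u in Ioc (0:ℝ) δ, ENNReal.ofReal ((F (s + u + δ) - F (s + u))^2))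
      ≤ ENNReal.ofReal (C2 * δ) * ENNReal.ofReal δ := by
  rw [lintegral_lintegral_swap]
  · calc ∫⁻ u in Ioc (0:ℝ) δ, ∫⁻ s in Ioi t, ENNReal.ofReal ((F (s + u + δ) - F (s + u))^2)
        ≤ ∫⁻ u in Ioc (0:ℝ) δ, ENNReal.ofReal (C2 * δ) := by
          apply lintegral_mono_ae
          rw [ae_restrict_iff' measurableSet_Ioc]
          filter_upwards with u hu
          exact tonelli_slice_diff hu.1.le h2δ
      _ = ENNReal.ofReal (C2 * δ) * ENNReal.ofReal δ := by
          rw [setLIntegral_const, Real.volume_Ioc, sub_zero]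
  · apply Measurable.aemeasurable
    apply Measurable.ennreal_ofReal
    apply Measurable.pow_const
    exact (hF.comp (by fun_prop)).sub (hF.comp (by fun_prop))

-- L² bound for pieces
lemma piece_L2 {F : ℝ → ℝ} {t C1 C2 : ℝ} (hF : Measurable F) (hF0 : ∀ v, 0 ≤ F v)
    {δ : ℝ} (hδ : 0 < δ) (hC2 : 0 ≤ C2)
    (h1 : ∫⁻ v in Ioi t, (ENNReal.ofReal (F v))^2 = ENNReal.ofReal C1)
    (h2δ : ∫⁻ v in Ioi t, ENNReal.ofReal ((F (v + δ) - F v)^2) ≤ ENNReal.ofReal (C2 * δ)) :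
    ∫⁻ s in Ioi t, ENNReal.ofReal ((gav F δ s - gav F (2*δ) s)^2)
      ≤ ENNReal.ofReal (C2 * δ / 4) := by
  refine (ENNReal.mul_le_mul_iff_left (c := ENNReal.ofReal (4*δ^2))
    (ENNReal.ofReal_pos.mpr (by positivity)).ne' ENNReal.ofReal_ne_top).mp ?_
  calc (∫⁻ s in Ioi t, ENNReal.ofReal ((gav F δ s - gav F (2*δ) s)^2)) * ENNReal.ofReal (4*δ^2)
      = ∫⁻ s in Ioi t, ENNReal.ofReal ((gav F δ s - gav F (2*δ) s)^2) * ENNReal.ofReal (4*δ^2) :=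
        (lintegral_mul_const' _ _ ENNReal.ofReal_ne_top).symm
    _ ≤ ∫⁻ s in Ioi t, ENNReal.ofReal δ *
          ∫⁻ u in Ioc (0:ℝ) δ, ENNReal.ofReal ((F (s + u + δ) - F (s + u))^2) := by
        apply lintegral_mono_ae
        rw [ae_restrict_iff' measurableSet_Ioi]
        filter_upwards with s hs
        exact piece_sq_mul_le hF hF0 hδ (le_of_lt hs) h1
    _ = ENNReal.ofReal δ * ∫⁻ s in Ioi t,
          (∫⁻ u in Ioc (0:ℝ) δ, ENNReal.ofReal ((F (s + u + δ) - F (s + u))^2)) :=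
        lintegral_const_mul' _ _ ENNReal.ofReal_ne_top
    _ ≤ ENNReal.ofReal δ * (ENNReal.ofReal (C2 * δ) * ENNReal.ofReal δ) :=
        mul_le_mul_right (tonelli_diff hF hδ h2δ) _
    _ = ENNReal.ofReal (C2 * δ / 4) * ENNReal.ofReal (4*δ^2) := by
        rw [← ENNReal.ofReal_mul (by positivity : (0:ℝ) ≤ C2 * δ),
          ← ENNReal.ofReal_mul hδ.le,
          ← ENNReal.ofReal_mul (by positivity : (0:ℝ) ≤ C2 * δ / 4)]
        congr 1
        ring

-- L⁴ bound for pieces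
lemma piece_L4 {F : ℝ → ℝ} {t C1 C2 : ℝ} (hF : Measurable F) (hF0 : ∀ v, 0 ≤ F v)
    {δ : ℝ} (hδ : 0 < δ) (hC2 : 0 ≤ C2)
    (h1 : ∫⁻ v in Ioi t, (ENNReal.ofReal (F v))^2 = ENNReal.ofReal C1)
    (h2δ : ∫⁻ v in Ioi t, ENNReal.ofReal ((F (v + δ) - F v)^2) ≤ ENNReal.ofReal (C2 * δ)) :
    ∫⁻ s in Ioi t, ENNReal.ofReal ((gav F δ s - gav F (2*δ) s)^4)
      ≤ ENNReal.ofReal (C2^2 * δ / 16) := by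
  have := l4_of_sup_l2 (μ := volume.restrict (Ioi t)) (h := fun s => gav F δ s - gav F (2*δ) s)
    (M := C2/4) (B := C2 * δ / 4) (by positivity)
    (by
      rw [ae_restrict_iff' measurableSet_Ioi]
      filter_upwards with s hs
      exact piece_sq_le hF hF0 hδ (le_of_lt hs) hC2 h1 h2δ)
    (piece_L2 hF hF0 hδ hC2 h1 h2δ)
  convert this using 2
  ring
-- L⁴ bound for gav
lemma gav_L4 {F : ℝ → ℝ} {t C1 : ℝ} (hF : Measurable F) (hF0 : ∀ v, 0 ≤ F v)
    {δ : ℝ} (hδ : 0 < δ) (hC1 : 0 ≤ C1)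
    (h1 : ∫⁻ v in Ioi t, (ENNReal.ofReal (F v))^2 = ENNReal.ofReal C1) :
    ∫⁻ s in Ioi t, ENNReal.ofReal ((gav F δ s)^4) ≤ ENNReal.ofReal ((C1/δ) * C1) :=
  l4_of_sup_l2 (μ := volume.restrict (Ioi t)) (M := C1/δ) (B := C1) (by positivity)
    (by
      rw [ae_restrict_iff' measurableSet_Ioi]
      filter_upwards with s hs
      exact gav_sq_le hF hδ (le_of_lt hs) h1 hC1)
    (gav_L2 hF hF0 hδ h1)

-- representation of gav - F
lemma gavF_abs_le {F : ℝ → ℝ} {t C1 : ℝ} (hF : Measurable F) (hF0 : ∀ v, 0 ≤ F v)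
    {δ s : ℝ} (hδ : 0 < δ) (hs : t ≤ s)
    (h1 : ∫⁻ v in Ioi t, (ENNReal.ofReal (F v))^2 = ENNReal.ofReal C1) :
    |gav F δ s - F s| ≤ ((∫⁻ u in Ioc (0:ℝ) δ, ENNReal.ofReal |F (s + u) - F s|)).toReal / δ := by
  set K := ∫⁻ u in Ioc (0:ℝ) δ, ENNReal.ofReal |F (s + u) - F s| with hK
  set B := ∫⁻ _u in Ioc (0:ℝ) δ, ENNReal.ofReal (F s) with hB
  have hBval : B = ENNReal.ofReal (F s) * ENNReal.ofReal δ := by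
    rw [hB, setLIntegral_const, Real.volume_Ioc, sub_zero]
  have hBfin : B ≠ ∞ := by rw [hBval]; finiteness
  have hIfin : Iav F δ s ≠ ∞ := Iav_ne_top hF hs h1
  have hKfin : K ≠ ∞ := by
    have hle : K ≤ Iav F δ s + B := by
      rw [hK, hB]
      unfold Iav
      have hm : Measurable fun u : ℝ => ENNReal.ofReal (F (s + u)) := by fun_prop
      rw [← lintegral_add_left hm]
      apply lintegral_mono
      intro u
      dsimp only
      rw [← ENNReal.ofReal_add (hF0 _) (hF0 _)]
      apply ENNReal.ofReal_le_ofReal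
      calc |F (s + u) - F s| ≤ |F (s + u)| + |F s| := abs_sub _ _
        _ = F (s + u) + F s := by rw [abs_of_nonneg (hF0 _), abs_of_nonneg (hF0 _)]
    exact ne_top_of_le_ne_top (ENNReal.add_ne_top.mpr ⟨hIfin, hBfin⟩) hle
  have hIB : Iav F δ s ≤ B + K := by
    rw [hB, hK]
    unfold Iav
    have hm : Measurable fun _u : ℝ => ENNReal.ofReal (F s) := measurable_const
    rw [← lintegral_add_left hm]
    apply lintegral_mono
    intro u
    dsimp only
    rw [← ENNReal.ofReal_add (hF0 _) (abs_nonneg _)]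
    apply ENNReal.ofReal_le_ofReal
    have := le_abs_self (F (s + u) - F s)
    linarith
  have hBI : B ≤ Iav F δ s + K := by
    rw [hB, hK]
    unfold Iav
    have hm : Measurable fun u : ℝ => ENNReal.ofReal (F (s + u)) := by fun_prop
    rw [← lintegral_add_left hm]
    apply lintegral_mono
    intro u
    dsimp only
    rw [← ENNReal.ofReal_add (hF0 _) (abs_nonneg _)]
    apply ENNReal.ofReal_le_ofReal
    have : F s - F (s + u) ≤ |F (s + u) - F s| := by
      rw [abs_sub_comm]; exact le_abs_self _
    linarith
  have key : |(Iav F δ s).toReal - B.toReal| ≤ K.toReal :=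
    toReal_sub_abs_le hIB hBI hIfin hBfin hKfin
  have hBr : B.toReal = F s * δ := by
    rw [hBval, ENNReal.toReal_mul, ENNReal.toReal_ofReal (hF0 s), ENNReal.toReal_ofReal hδ.le]
  have hrepr : gav F δ s - F s = ((Iav F δ s).toReal - B.toReal) / δ := by
    unfold gav
    rw [hBr]
    field_simp
  rw [hrepr, abs_div, abs_of_pos hδ]
  exact (div_le_div_iff_of_pos_right hδ).mpr key

-- L² bound for gav - F
lemma gavF_L2 {F : ℝ → ℝ} {t C1 C2 : ℝ} (hF : Measurable F) (hF0 : ∀ v, 0 ≤ F v)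
    {δ : ℝ} (hδ : 0 < δ) (hC2 : 0 ≤ C2)
    (h1 : ∫⁻ v in Ioi t, (ENNReal.ofReal (F v))^2 = ENNReal.ofReal C1)
    (h2 : ∀ τ : ℝ, 0 < τ →
      ∫⁻ v in Ioi t, ENNReal.ofReal ((F (v + τ) - F v)^2) ≤ ENNReal.ofReal (C2 * τ)) :
    ∫⁻ s in Ioi t, ENNReal.ofReal ((gav F δ s - F s)^2) ≤ ENNReal.ofReal (C2 * δ) := by
  -- pointwise: ofReal((gav-F)²) * ofReal(δ²) ≤ ofReal δ * Q s
  have hpt : ∀ s, t < s → ENNReal.ofReal ((gav F δ s - F s)^2) * ENNReal.ofReal (δ^2)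
      ≤ ENNReal.ofReal δ * ∫⁻ u in Ioc (0:ℝ) δ, ENNReal.ofReal ((F (s + u) - F s)^2) := by
    intro s hs
    set K := ∫⁻ u in Ioc (0:ℝ) δ, ENNReal.ofReal |F (s + u) - F s| with hKdef
    have habs := gavF_abs_le hF hF0 hδ hs.le h1
    have hKsq : K^2 ≤ ENNReal.ofReal δ *
        ∫⁻ u in Ioc (0:ℝ) δ, ENNReal.ofReal ((F (s + u) - F s)^2) := by
      have hm : AEMeasurable (fun u : ℝ => ENNReal.ofReal |F (s + u) - F s|)
          (volume.restrict (Ioc (0:ℝ) δ)) := by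
        apply Measurable.aemeasurable; fun_prop
      have := cauchy_schwarz_lintegral (μ := volume.restrict (Ioc (0:ℝ) δ)) _ hm
      simp only [Measure.restrict_apply, MeasurableSet.univ, Set.univ_inter, Real.volume_Ioc,
        sub_zero] at this
      refine this.trans (le_of_eq ?_)
      congr 1
      apply lintegral_congr
      intro u
      rw [← ENNReal.ofReal_pow (abs_nonneg _), sq_abs]
    rcases eq_or_ne K ∞ with hKtop | hKfin
    · -- then RHS is ∞ too
      have : ENNReal.ofReal δ *
          (∫⁻ u in Ioc (0:ℝ) δ, ENNReal.ofReal ((F (s + u) - F s)^2)) = ∞ := by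
        by_contra hne
        have h2' : K^2 ≠ ∞ := ne_top_of_le_ne_top hne hKsq
        rw [hKtop] at h2'
        simp [ENNReal.top_pow] at h2'
      rw [this]; exact le_top
    · have h0 : (gav F δ s - F s)^2 * δ^2 ≤ K.toReal^2 := by
        have h0' : (gav F δ s - F s)^2 ≤ (K.toReal / δ)^2 := by
          rw [← sq_abs]
          exact pow_le_pow_left₀ (abs_nonneg _) habs 2
        rw [div_pow] at h0'
        calc (gav F δ s - F s)^2 * δ^2 ≤ (K.toReal^2/δ^2) * δ^2 :=
              mul_le_mul_of_nonneg_right h0' (by positivity)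
          _ = K.toReal^2 := by field_simp
      calc ENNReal.ofReal ((gav F δ s - F s)^2) * ENNReal.ofReal (δ^2)
          = ENNReal.ofReal ((gav F δ s - F s)^2 * δ^2) := (ENNReal.ofReal_mul (sq_nonneg _)).symm
        _ ≤ ENNReal.ofReal (K.toReal^2) := ENNReal.ofReal_le_ofReal h0
        _ = K^2 := by rw [← ENNReal.toReal_pow, ENNReal.ofReal_toReal (ENNReal.pow_ne_top hKfin)]
        _ ≤ _ := hKsq
  -- Tonelli
  have hTon : ∫⁻ s in Ioi t, (∫⁻ u in Ioc (0:ℝ) δ, ENNReal.ofReal ((F (s + u) - F s)^2))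
      ≤ ENNReal.ofReal (C2 * δ) * ENNReal.ofReal δ := by
    rw [lintegral_lintegral_swap]
    · calc ∫⁻ u in Ioc (0:ℝ) δ, ∫⁻ s in Ioi t, ENNReal.ofReal ((F (s + u) - F s)^2)
          ≤ ∫⁻ u in Ioc (0:ℝ) δ, ENNReal.ofReal (C2 * δ) := by
            apply lintegral_mono_ae
            rw [ae_restrict_iff' measurableSet_Ioc]
            filter_upwards with u hu
            refine (h2 u hu.1).trans (ENNReal.ofReal_le_ofReal ?_)
            exact mul_le_mul_of_nonneg_left hu.2 hC2
        _ = ENNReal.ofReal (C2 * δ) * ENNReal.ofReal δ := by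
            rw [setLIntegral_const, Real.volume_Ioc, sub_zero]
    · apply Measurable.aemeasurable
      apply Measurable.ennreal_ofReal
      apply Measurable.pow_const
      exact (hF.comp (by fun_prop)).sub (hF.comp (by fun_prop))
  refine (ENNReal.mul_le_mul_iff_left (c := ENNReal.ofReal (δ^2))
    (ENNReal.ofReal_pos.mpr (by positivity)).ne' ENNReal.ofReal_ne_top).mp ?_
  calc (∫⁻ s in Ioi t, ENNReal.ofReal ((gav F δ s - F s)^2)) * ENNReal.ofReal (δ^2)
      = ∫⁻ s in Ioi t, ENNReal.ofReal ((gav F δ s - F s)^2) * ENNReal.ofReal (δ^2) :=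
        (lintegral_mul_const' _ _ ENNReal.ofReal_ne_top).symm
    _ ≤ ∫⁻ s in Ioi t, ENNReal.ofReal δ *
          ∫⁻ u in Ioc (0:ℝ) δ, ENNReal.ofReal ((F (s + u) - F s)^2) := by
        apply lintegral_mono_ae
        rw [ae_restrict_iff' measurableSet_Ioi]
        filter_upwards with s hs
        exact hpt s hs
    _ = ENNReal.ofReal δ * ∫⁻ s in Ioi t,
          (∫⁻ u in Ioc (0:ℝ) δ, ENNReal.ofReal ((F (s + u) - F s)^2)) :=
        lintegral_const_mul' _ _ ENNReal.ofReal_ne_top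
    _ ≤ ENNReal.ofReal δ * (ENNReal.ofReal (C2 * δ) * ENNReal.ofReal δ) :=
        mul_le_mul_right hTon _
    _ = ENNReal.ofReal (C2 * δ) * ENNReal.ofReal (δ^2) := by
        rw [← ENNReal.ofReal_mul (by positivity : (0:ℝ) ≤ C2 * δ),
          ← ENNReal.ofReal_mul hδ.le, ← ENNReal.ofReal_mul (by positivity : (0:ℝ) ≤ C2*δ)]
        congr 1
        ring
lemma eLpNorm_two_eq {μ : Measure ℝ} (h : ℝ → ℝ) :
    eLpNorm h 2 μ = (∫⁻ s, ENNReal.ofReal ((h s)^2) ∂μ) ^ ((1:ℝ)/2) := by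
  rw [eLpNorm_eq_lintegral_rpow_enorm_toReal (by norm_num) (by norm_num)]
  rw [ENNReal.toReal_ofNat]
  congr 1
  apply lintegral_congr
  intro s
  rw [Real.enorm_eq_ofReal_abs, show ((2:ℝ)) = ((2:ℕ):ℝ) by norm_num,
    ENNReal.rpow_natCast, ← ENNReal.ofReal_pow (abs_nonneg _), sq_abs]

lemma eLpNorm_two_le {μ : Measure ℝ} {h : ℝ → ℝ} {m : ℝ} (hm : 0 ≤ m)
    (hL : ∫⁻ s, ENNReal.ofReal ((h s)^2) ∂μ ≤ ENNReal.ofReal (m^2)) :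
    eLpNorm h 2 μ ≤ ENNReal.ofReal m := by
  rw [eLpNorm_two_eq]
  calc (∫⁻ s, ENNReal.ofReal ((h s)^2) ∂μ) ^ ((1:ℝ)/2)
      ≤ (ENNReal.ofReal (m^2)) ^ ((1:ℝ)/2) := ENNReal.rpow_le_rpow hL (by norm_num)
    _ = ENNReal.ofReal m := by
        rw [ENNReal.ofReal_pow hm, ← ENNReal.rpow_natCast (ENNReal.ofReal m) 2,
          ← ENNReal.rpow_mul]
        norm_num
set_option maxHeartbeats 2000000 in
theorem main_real {F : ℝ → ℝ} {t C1 C2 : ℝ} (hF : Measurable F) (hF0 : ∀ v, 0 ≤ F v)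
    (hC1 : 0 < C1) (hC2 : 0 < C2)
    (h1 : ∫⁻ v in Ioi t, (ENNReal.ofReal (F v))^2 = ENNReal.ofReal C1)
    (h2 : ∀ τ : ℝ, 0 < τ →
      ∫⁻ v in Ioi t, ENNReal.ofReal ((F (v + τ) - F v)^2) ≤ ENNReal.ofReal (C2 * τ)) :
    ∫⁻ s in Ioi t, ENNReal.ofReal ((F s)^4)
      ≤ ENNReal.ofReal ((2 / (2 ^ ((1:ℝ)/4) - 1))^2 * C1 * C2) := by
  set μ := volume.restrict (Ioi t) with hμ
  -- constants
  set q : ℝ := (2:ℝ) ^ (-(1/4) : ℝ) with hqdef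
  have hq0 : 0 < q := Real.rpow_pos_of_pos two_pos _
  have hq1 : q < 1 := by
    rw [hqdef]
    apply Real.rpow_lt_one_of_one_lt_of_neg one_lt_two
    norm_num
  have hq4 : q^4 = 1/2 := by
    rw [hqdef, ← Real.rpow_natCast ((2:ℝ) ^ (-(1/4):ℝ)) 4, ← Real.rpow_mul (by norm_num)]
    norm_num
  set a : ℝ := Real.sqrt C1 with hadef
  set b : ℝ := Real.sqrt C2 * q / (2*(1-q)) with hbdef
  have ha : 0 < a := Real.sqrt_pos.mpr hC1
  have hb : 0 < b := by
    rw [hbdef]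
    have := Real.sqrt_pos.mpr hC2
    have h1q : 0 < 1 - q := by linarith
    positivity
  have ha2 : a^2 = C1 := Real.sq_sqrt hC1.le
  have hbsq : b^2 = C2 * q^2 / (4*(1-q)^2) := by
    rw [hbdef]
    rw [div_pow, mul_pow, mul_pow]
    rw [Real.sq_sqrt hC2.le]
    ring
  set ρ : ℝ := Real.sqrt (a/b) with hρdef
  have hρ : 0 < ρ := Real.sqrt_pos.mpr (by positivity)
  have hρ2 : ρ^2 = a/b := Real.sq_sqrt (by positivity)
  set σ : ℝ := ρ^4 with hσdef
  have hσ : 0 < σ := by positivity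
  set τ : ℕ → ℝ := fun k => σ * (1/2)^k with hτdef
  have hτpos : ∀ k, 0 < τ k := fun k => by
    rw [hτdef]; positivity
  have hτ0 : τ 0 = σ := by rw [hτdef]; norm_num
  have hτhalf : ∀ k, τ k = 2 * τ (k+1) := fun k => by
    rw [hτdef]; simp only [pow_succ]; ring
  have hρq : ∀ j, (ρ * q^j)^4 = τ j := fun j => by
    rw [hτdef, mul_pow, ← pow_mul, mul_comm j 4, pow_mul, hq4, ← hσdef]
  -- eLpNorm bound for gav at scale σ
  have hgσ : eLpNorm (gav F σ) 4 μ ≤ ENNReal.ofReal (a/ρ) := by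
    apply eLpNorm_four_le (by positivity)
    have heq : (a/ρ)^4 = (C1/σ) * C1 := by
      rw [div_pow, hσdef]
      rw [show a^4 = (a^2)^2 by ring, ha2]
      ring
    rw [heq]
    exact gav_L4 hF hF0 hσ hC1.le h1
  -- eLpNorm bound for the pieces
  have hpiece : ∀ k : ℕ, eLpNorm (fun s => gav F (τ (k+1)) s - gav F (τ k) s) 4 μ
      ≤ ENNReal.ofReal (Real.sqrt C2 * ρ * q^(k+1) / 2) := by
    intro k
    apply eLpNorm_four_le (by positivity)
    have heq : (Real.sqrt C2 * ρ * q^(k+1) / 2)^4 = C2^2 * τ (k+1) / 16 := by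
      rw [div_pow, mul_pow, mul_pow, show (Real.sqrt C2)^4 = ((Real.sqrt C2)^2)^2 by ring,
        Real.sq_sqrt hC2.le, ← hρq (k+1)]
      rw [mul_pow]
      ring
    rw [heq]
    rw [hτhalf k]
    exact piece_L4 hF hF0 (hτpos (k+1)) hC2.le h1 (h2 _ (hτpos (k+1)))
  -- geometric sum bound
  have h1q : 0 < 1 - q := by linarith
  have hsum : ∀ N : ℕ, ∑ k ∈ Finset.range N, (Real.sqrt C2 * ρ * q^(k+1) / 2) ≤ b * ρ := by
    intro N
    have hgeom : ∑ k ∈ Finset.range N, q^k ≤ 1/(1-q) := by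
      rw [geom_sum_eq hq1.ne N]
      rw [show (q^N - 1)/(q - 1) = (1 - q^N)/(1 - q) by rw [← neg_div_neg_eq]; ring_nf]
      gcongr
      · nlinarith [pow_nonneg hq0.le N]
    calc ∑ k ∈ Finset.range N, (Real.sqrt C2 * ρ * q^(k+1) / 2)
        = (Real.sqrt C2 * ρ * q / 2) * ∑ k ∈ Finset.range N, q^k := by
          rw [Finset.mul_sum]
          apply Finset.sum_congr rfl
          intro k _
          rw [pow_succ]
          ring
      _ ≤ (Real.sqrt C2 * ρ * q / 2) * (1/(1-q)) := by
          apply mul_le_mul_of_nonneg_left hgeom (by positivity)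
      _ = b * ρ := by rw [hbdef]; field_simp
  -- Minkowski chain
  have hchain : ∀ N : ℕ, eLpNorm (gav F (τ N)) 4 μ ≤ ENNReal.ofReal (a/ρ + b*ρ) := by
    intro N
    have hdecomp : gav F (τ N) = gav F σ +
        ∑ k ∈ Finset.range N, (fun s => gav F (τ (k+1)) s - gav F (τ k) s) := by
      funext s
      simp only [Pi.add_apply, Finset.sum_apply]
      rw [Finset.sum_range_sub (f := fun k => gav F (τ k) s), hτ0]
      ring
    rw [hdecomp]
    have hm1 : AEStronglyMeasurable (gav F σ) μ := (gav_measurable hF σ).aestronglyMeasurable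
    have hm2 : ∀ k : ℕ, AEStronglyMeasurable (fun s => gav F (τ (k+1)) s - gav F (τ k) s) μ :=
      fun k => ((gav_measurable hF _).sub (gav_measurable hF _)).aestronglyMeasurable
    have hm3 : AEStronglyMeasurable
        (∑ k ∈ Finset.range N, (fun s => gav F (τ (k+1)) s - gav F (τ k) s)) μ :=
      Finset.aestronglyMeasurable_sum _ (fun k _ => hm2 k)
    refine (eLpNorm_add_le hm1 hm3 (by norm_num)).trans ?_
    have hsumN : eLpNorm (∑ k ∈ Finset.range N, (fun s => gav F (τ (k+1)) s - gav F (τ k) s)) 4 μ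
        ≤ ENNReal.ofReal (b * ρ) := by
      refine (eLpNorm_sum_le (fun k _ => hm2 k) (by norm_num)).trans ?_
      calc ∑ k ∈ Finset.range N, eLpNorm (fun s => gav F (τ (k+1)) s - gav F (τ k) s) 4 μ
          ≤ ∑ k ∈ Finset.range N, ENNReal.ofReal (Real.sqrt C2 * ρ * q^(k+1) / 2) :=
            Finset.sum_le_sum (fun k _ => hpiece k)
        _ = ENNReal.ofReal (∑ k ∈ Finset.range N, (Real.sqrt C2 * ρ * q^(k+1) / 2)) :=
            (ENNReal.ofReal_sum_of_nonneg (fun k _ => by positivity)).symm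
        _ ≤ ENNReal.ofReal (b * ρ) := ENNReal.ofReal_le_ofReal (hsum N)
    calc eLpNorm (gav F σ) 4 μ +
          eLpNorm (∑ k ∈ Finset.range N, (fun s => gav F (τ (k+1)) s - gav F (τ k) s)) 4 μ
        ≤ ENNReal.ofReal (a/ρ) + ENNReal.ofReal (b*ρ) := add_le_add hgσ hsumN
      _ = ENNReal.ofReal (a/ρ + b*ρ) := (ENNReal.ofReal_add (by positivity) (by positivity)).symm
  -- convergence in L²
  have hconv : ∀ N : ℕ, eLpNorm (gav F (τ N) - F) 2 μ
      ≤ ENNReal.ofReal (Real.sqrt (C2*σ) * (Real.sqrt (1/2))^N) := by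
    intro N
    apply eLpNorm_two_le (by positivity)
    have heq : (Real.sqrt (C2*σ) * (Real.sqrt (1/2))^N)^2 = C2 * τ N := by
      rw [mul_pow, ← pow_mul, mul_comm N 2, pow_mul, Real.sq_sqrt (by positivity),
        Real.sq_sqrt (by norm_num : (0:ℝ) ≤ 1/2), hτdef]
      ring
    rw [heq]
    refine le_trans (le_of_eq ?_) (gavF_L2 hF hF0 (hτpos N) hC2.le h1 h2)
    apply lintegral_congr
    intro s
    simp only [Pi.sub_apply]
  have hlim0 : Tendsto (fun N => eLpNorm (gav F (τ N) - F) 2 μ) atTop (𝓝 0) := by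
    have hup : Tendsto (fun N : ℕ => ENNReal.ofReal (Real.sqrt (C2*σ) * (Real.sqrt (1/2))^N))
        atTop (𝓝 0) := by
      rw [show (0:ℝ≥0∞) = ENNReal.ofReal 0 by simp]
      apply ENNReal.tendsto_ofReal
      have hr1 : Real.sqrt (1/2) < 1 := by
        rw [show (1:ℝ) = Real.sqrt 1 by simp]
        exact Real.sqrt_lt_sqrt (by norm_num) (by norm_num)
      have hbase : Tendsto (fun N : ℕ => (Real.sqrt (1/2))^N) atTop (𝓝 0) :=
        tendsto_pow_atTop_nhds_zero_of_lt_one (Real.sqrt_nonneg _) hr1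
      have := hbase.const_mul (Real.sqrt (C2*σ))
      simpa using this
    exact tendsto_of_tendsto_of_tendsto_of_le_of_le tendsto_const_nhds hup
      (fun N => zero_le) hconv
  have htim : TendstoInMeasure μ (fun N => gav F (τ N)) atTop F :=
    tendstoInMeasure_of_tendsto_eLpNorm (p := 2) (by norm_num)
      (fun N => (gav_measurable hF (τ N)).aestronglyMeasurable)
      hF.aestronglyMeasurable hlim0
  obtain ⟨ns, hns, hae⟩ := htim.exists_seq_tendsto_ae
  -- Fatou
  have hFatou : ∫⁻ s, ENNReal.ofReal ((F s)^4) ∂μ ≤ ENNReal.ofReal ((a/ρ + b*ρ)^4) := by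
    have hcongr : ∫⁻ s, ENNReal.ofReal ((F s)^4) ∂μ
        = ∫⁻ s, liminf (fun j => ENNReal.ofReal ((gav F (τ (ns j)) s)^4)) atTop ∂μ := by
      apply lintegral_congr_ae
      filter_upwards [hae] with s hs
      have h4 : Tendsto (fun j => ENNReal.ofReal ((gav F (τ (ns j)) s)^4)) atTop
          (𝓝 (ENNReal.ofReal ((F s)^4))) := ENNReal.tendsto_ofReal (hs.pow 4)
      rw [h4.liminf_eq]
    rw [hcongr]
    refine (lintegral_liminf_le fun j =>
      Measurable.ennreal_ofReal ((gav_measurable hF _).pow_const 4)).trans ?_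
    have hboundj : ∀ j, ∫⁻ s, ENNReal.ofReal ((gav F (τ (ns j)) s)^4) ∂μ
        ≤ ENNReal.ofReal ((a/ρ + b*ρ)^4) := fun j =>
      lintegral_four_le_of_eLpNorm (by positivity) (hchain (ns j))
    calc liminf (fun j => ∫⁻ s, ENNReal.ofReal ((gav F (τ (ns j)) s)^4) ∂μ) atTop
        ≤ liminf (fun _ => ENNReal.ofReal ((a/ρ + b*ρ)^4)) atTop :=
          liminf_le_liminf (Eventually.of_forall hboundj)
      _ = ENNReal.ofReal ((a/ρ + b*ρ)^4) := liminf_const _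
  -- final numerics
  refine hFatou.trans (le_of_eq ?_)
  congr 1
  have hba : b * ρ = a / ρ := by
    rw [eq_div_iff hρ.ne', mul_assoc, ← pow_two, hρ2]
    field_simp
  have hρ4 : ρ^4 = a^2/b^2 := by
    rw [show ρ^4 = (ρ^2)^2 by ring, hρ2, div_pow]
  have h2q : (2:ℝ) ^ ((1:ℝ)/4) = q⁻¹ := by
    have hq' : q = ((2:ℝ) ^ ((1:ℝ)/4))⁻¹ := by
      rw [hqdef, ← Real.rpow_neg (by norm_num : (0:ℝ) ≤ 2)]
    rw [hq', inv_inv]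
  have key : (a/ρ + b*ρ)^4 = 16 * a^2 * b^2 := by
    rw [hba, show a/ρ + a/ρ = 2*(a/ρ) by ring, mul_pow, div_pow, hρ4]
    have hane : a ≠ 0 := ha.ne'
    have hbne : b ≠ 0 := hb.ne'
    field_simp
    ring
  rw [key, ha2, hbsq, h2q]
  have hqne : q ≠ 0 := hq0.ne'
  have h1qne : (1:ℝ) - q ≠ 0 := h1q.ne'
  field_simp
  ring
theorem stmt_7 {H : Type*} [NormedAddCommGroup H]
    (x : ℝ → H) (t C1 C2 : ℝ)
    (hmeas : AEStronglyMeasurable x (volume.restrict (Set.Ioi t)))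
    (hC1 : ∫⁻ s in Set.Ioi t, ENNReal.ofReal (‖x s‖^2) = ENNReal.ofReal C1)
    (hC2 : ∀ τ : ℝ, 0 < τ →
      ∫⁻ s in Set.Ioi t, ENNReal.ofReal (‖x (s + τ) - x s‖^2) ≤ ENNReal.ofReal (C2 * τ)) :
    ∫⁻ s in Set.Ioi t, ENNReal.ofReal (‖x s‖^4)
      ≤ ENNReal.ofReal ((2 / (2 ^ ((1:ℝ)/4) - 1))^2 * C1 * C2) := by
  by_cases hC1pos : 0 < C1
  swap
  · have h0 : ∫⁻ s in Set.Ioi t, ENNReal.ofReal (‖x s‖^2) = 0 := by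
      rw [hC1, ENNReal.ofReal_eq_zero.mpr (not_lt.mp hC1pos)]
    have hmeas2 : AEMeasurable (fun s => ENNReal.ofReal (‖x s‖^2))
        (volume.restrict (Set.Ioi t)) :=
      (hmeas.norm.aemeasurable.pow_const 2).ennreal_ofReal
    have hae0 : ∀ᵐ s ∂(volume.restrict (Set.Ioi t)), ENNReal.ofReal (‖x s‖^2) = 0 :=
      (lintegral_eq_zero_iff' hmeas2).mp h0
    have hz : ∫⁻ s in Set.Ioi t, ENNReal.ofReal (‖x s‖^4) = 0 := by
      rw [← lintegral_zero (μ := volume.restrict (Set.Ioi t))]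
      apply lintegral_congr_ae
      filter_upwards [hae0] with s hs
      have hx : ‖x s‖ = 0 := by
        have := ENNReal.ofReal_eq_zero.mp hs
        nlinarith [norm_nonneg (x s), sq_nonneg (‖x s‖)]
      rw [hx]
      norm_num
    rw [hz]
    exact zero_le
  set F : ℝ → ℝ := fun s => ‖hmeas.mk x s‖ with hFdef
  have hF : Measurable F := hmeas.stronglyMeasurable_mk.norm.measurable
  have hF0 : ∀ v, 0 ≤ F v := fun v => norm_nonneg _
  have haeq : ∀ᵐ s ∂(volume.restrict (Set.Ioi t)), F s = ‖x s‖ := by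
    filter_upwards [hmeas.ae_eq_mk] with s hs
    simp only [hFdef]
    rw [← hs]
  have haeq_shift : ∀ τ : ℝ, 0 ≤ τ →
      ∀ᵐ s ∂(volume.restrict (Set.Ioi t)), F (s + τ) = ‖x (s + τ)‖ := by
    intro τ hτ
    have h0 : (volume.restrict (Set.Ioi t)) {s | x s ≠ hmeas.mk x s} = 0 := by
      have := hmeas.ae_eq_mk
      rwa [Filter.EventuallyEq, ae_iff] at this
    have hnull : volume ({s | x s ≠ hmeas.mk x s} ∩ Set.Ioi t) = 0 := by
      rwa [Measure.restrict_apply' measurableSet_Ioi] at h0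
    have hpre : volume ((fun s => s + τ) ⁻¹' ({s | x s ≠ hmeas.mk x s} ∩ Set.Ioi t)) = 0 :=
      (measurePreserving_add_right volume τ).quasiMeasurePreserving.preimage_null hnull
    have hvol : ∀ᵐ s ∂volume, s + τ ∉ ({s | x s ≠ hmeas.mk x s} ∩ Set.Ioi t) := by
      rw [ae_iff]
      simp only [not_not]
      exact hpre
    rw [ae_restrict_iff' measurableSet_Ioi]
    filter_upwards [hvol] with s hs hst
    have hmem : s + τ ∈ Set.Ioi t := by
      simp only [Set.mem_Ioi] at *
      linarith
    have hxe : x (s + τ) = hmeas.mk x (s + τ) := by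
      by_contra hne
      exact hs ⟨hne, hmem⟩
    simp only [hFdef]
    rw [← hxe]
  have h1F : ∫⁻ v in Set.Ioi t, (ENNReal.ofReal (F v))^2 = ENNReal.ofReal C1 := by
    rw [← hC1]
    apply lintegral_congr_ae
    filter_upwards [haeq] with s hs
    rw [hs, ← ENNReal.ofReal_pow (norm_nonneg _)]
  have h2F : ∀ τ : ℝ, 0 < τ →
      ∫⁻ v in Set.Ioi t, ENNReal.ofReal ((F (v + τ) - F v)^2) ≤ ENNReal.ofReal (C2 * τ) := by
    intro τ hτ
    refine le_trans ?_ (hC2 τ hτ)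
    apply lintegral_mono_ae
    filter_upwards [haeq, haeq_shift τ hτ.le] with s hs hshift
    apply ENNReal.ofReal_le_ofReal
    rw [hs, hshift]
    have habs : |‖x (s + τ)‖ - ‖x s‖| ≤ ‖x (s + τ) - x s‖ := abs_norm_sub_norm_le _ _
    calc (‖x (s + τ)‖ - ‖x s‖)^2 = |‖x (s + τ)‖ - ‖x s‖|^2 := (sq_abs _).symm
      _ ≤ ‖x (s + τ) - x s‖^2 := pow_le_pow_left₀ (abs_nonneg _) habs 2
  by_cases hC2pos : 0 < C2
  swap
  · exfalso
    have hzero : ∀ τ : ℝ, 0 < τ →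
        ∀ᵐ s ∂(volume.restrict (Set.Ioi t)), F (s + τ) = F s := by
      intro τ hτ
      have hle := h2F τ hτ
      have hz : ENNReal.ofReal (C2 * τ) = 0 :=
        ENNReal.ofReal_eq_zero.mpr (mul_nonpos_of_nonpos_of_nonneg (not_lt.mp hC2pos) hτ.le)
      rw [hz, le_zero_iff] at hle
      have hm : AEMeasurable (fun s => ENNReal.ofReal ((F (s + τ) - F s)^2))
          (volume.restrict (Set.Ioi t)) := by
        apply Measurable.aemeasurable; fun_prop
      have hae := (lintegral_eq_zero_iff' hm).mp hle
      filter_upwards [hae] with s hs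
      have := ENNReal.ofReal_eq_zero.mp hs
      nlinarith [sq_nonneg (F (s + τ) - F s)]
    have hIoc : ∀ τ : ℝ, 0 < τ → ∫⁻ v in Set.Ioc t (t + τ), (ENNReal.ofReal (F v))^2 = 0 := by
      intro τ hτ
      have hshift_eq : ∫⁻ s in Set.Ioi t, (ENNReal.ofReal (F (s + τ)))^2
          = ∫⁻ v in Set.Ioi (t + τ), (ENNReal.ofReal (F v))^2 :=
        shift_Ioi (fun v => (ENNReal.ofReal (F v))^2) τ t
      have hcongr : ∫⁻ s in Set.Ioi t, (ENNReal.ofReal (F (s + τ)))^2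
          = ∫⁻ s in Set.Ioi t, (ENNReal.ofReal (F s))^2 := by
        apply lintegral_congr_ae
        filter_upwards [hzero τ hτ] with s hs
        rw [hs]
      have htail : ∫⁻ v in Set.Ioi (t + τ), (ENNReal.ofReal (F v))^2 = ENNReal.ofReal C1 := by
        rw [← hshift_eq, hcongr, h1F]
      have hsplit : Set.Ioi t = Set.Ioc t (t + τ) ∪ Set.Ioi (t + τ) :=
        (Set.Ioc_union_Ioi_eq_Ioi (by linarith)).symm
      have hunion : ∫⁻ v in Set.Ioi t, (ENNReal.ofReal (F v))^2
          = (∫⁻ v in Set.Ioc t (t + τ), (ENNReal.ofReal (F v))^2)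
            + ∫⁻ v in Set.Ioi (t + τ), (ENNReal.ofReal (F v))^2 := by
        rw [hsplit, lintegral_union measurableSet_Ioi (Set.Ioc_disjoint_Ioi le_rfl)]
      rw [h1F, htail] at hunion
      have hfin : ENNReal.ofReal C1 ≠ ⊤ := ENNReal.ofReal_ne_top
      have hswap : ENNReal.ofReal C1 + (∫⁻ v in Set.Ioc t (t + τ), (ENNReal.ofReal (F v))^2)
          = ENNReal.ofReal C1 + 0 := by
        rw [add_zero, add_comm]
        exact hunion.symm
      exact (ENNReal.add_right_inj hfin).mp hswap
    have hcover : ∫⁻ v in Set.Ioi t, (ENNReal.ofReal (F v))^2 = 0 := by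
      have hsub : Set.Ioi t ⊆ ⋃ n : ℕ, Set.Ioc t (t + ((n:ℝ) + 1)) := by
        intro v hv
        simp only [Set.mem_Ioi] at hv
        obtain ⟨n, hn⟩ := exists_nat_ge (v - t)
        refine Set.mem_iUnion.mpr ⟨n, ?_⟩
        simp only [Set.mem_Ioc]
        exact ⟨hv, by linarith⟩
      have hle := lintegral_mono_set (f := fun v => (ENNReal.ofReal (F v))^2)
        (μ := volume) hsub
      refine le_antisymm (hle.trans ?_) zero_le
      refine (lintegral_iUnion_le _ _).trans ?_
      have hzero' : ∀ n : ℕ, ∫⁻ v in Set.Ioc t (t + ((n:ℝ) + 1)), (ENNReal.ofReal (F v))^2 = 0 :=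
        fun n => hIoc ((n:ℝ) + 1) (by positivity)
      simp [hzero']
    rw [h1F] at hcover
    exact absurd (ENNReal.ofReal_eq_zero.mp hcover) (not_le.mpr hC1pos)
  have hmain := main_real hF hF0 hC1pos hC2pos h1F h2F
  refine le_trans (le_of_eq ?_) hmain
  apply lintegral_congr_ae
  filter_upwards [haeq] with s hs
  rw [hs]
end

section
/- Let $A$ be a bounded self-adjoint operator with spectral measure $E$, and $T_s(t)=\int_{\alpha>0} e^{-t/\alpha} dE_\alpha$ for $t>0$. Then for every $r>0$ and $t>0$, $T_s(t)$ maps $H$ into the range of $|A|^r$, and there is a constant $C=C(r)$ such that $\||A|^{-r}T_s(t)h\| \le C t^{-r}\|h\|$ for all $h\in H$ and $t>0$. -/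
open scoped ENNReal
open Real Filter Topology

private lemma aux_pow_exp (r : ℝ) (hr : 0 < r) :
    ∃ C : ℝ, 0 < C ∧ ∀ x : ℝ, 0 < x → x ^ r * Real.exp (-x) ≤ C := by
  refine ⟨(Nat.factorial (Nat.ceil r) : ℝ), by positivity, fun x hx => ?_⟩
  have hfac : (1 : ℝ) ≤ (Nat.factorial (Nat.ceil r) : ℝ) := by exact_mod_cast (Nat.ceil r).factorial_pos
  rcases le_or_gt x 1 with h1 | h1
  · calc x ^ r * Real.exp (-x) ≤ 1 * 1 := by
          apply mul_le_mul (Real.rpow_le_one hx.le h1 hr.le) _ (Real.exp_pos _).le zero_le_one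
          exact Real.exp_le_one_iff.mpr (by linarith)
      _ ≤ _ := by simpa using hfac
  · have h2 : x ^ r ≤ x ^ (Nat.ceil r : ℕ) := by
      rw [← Real.rpow_natCast x (Nat.ceil r)]
      exact Real.rpow_le_rpow_of_exponent_le h1.le (Nat.le_ceil r)
    have h3 : x ^ (Nat.ceil r : ℕ) ≤ (Nat.factorial (Nat.ceil r) : ℝ) * Real.exp x := by
      have := Real.pow_div_factorial_le_exp x hx.le (Nat.ceil r)
      rw [div_le_iff₀ (by positivity)] at this
      linarith [this]
    calc x ^ r * Real.exp (-x) ≤ ((Nat.factorial (Nat.ceil r) : ℝ) * Real.exp x) * Real.exp (-x) := by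
          apply mul_le_mul_of_nonneg_right (h2.trans h3) (Real.exp_pos _).le
      _ = (Nat.factorial (Nat.ceil r) : ℝ) := by rw [mul_assoc, ← Real.exp_add, add_neg_cancel, Real.exp_zero, mul_one]

private lemma aux_cont_g (r t : ℝ) (hr : 0 < r) (ht : 0 < t) :
    Continuous (fun α : ℝ => if 0 < α then α ^ (-r) * Real.exp (-t / α) else 0) := by
  rw [continuous_iff_continuousAt]
  intro x
  rcases lt_trichotomy x 0 with hx | rfl | hx
  · apply (continuousAt_const : ContinuousAt (fun _ : ℝ => (0:ℝ)) x).congr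
    filter_upwards [Iio_mem_nhds hx] with y (hy : y < 0)
    simp [not_lt.mpr hy.le]
  · have h0 : (if (0:ℝ) < (0:ℝ) then (0:ℝ) ^ (-r) * Real.exp (-t / 0) else 0) = 0 := by simp
    have hle : Tendsto (fun α : ℝ => if 0 < α then α ^ (-r) * Real.exp (-t / α) else 0)
        (𝓝[≤] (0:ℝ)) (𝓝 0) := by
      apply Tendsto.congr' _ tendsto_const_nhds
      filter_upwards [self_mem_nhdsWithin] with y (hy : y ≤ 0)
      simp [not_lt.mpr hy]
    have hgt : Tendsto (fun α : ℝ => if 0 < α then α ^ (-r) * Real.exp (-t / α) else 0)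
        (𝓝[>] (0:ℝ)) (𝓝 0) := by
      have hF : Tendsto (fun y : ℝ => y ^ r * Real.exp (-t * y)) atTop (𝓝 0) :=
        tendsto_rpow_mul_exp_neg_mul_atTop_nhds_zero r t ht
      have := hF.comp tendsto_inv_nhdsGT_zero
      apply this.congr'
      filter_upwards [self_mem_nhdsWithin] with α (hα : 0 < α)
      simp only [Function.comp, if_pos hα]
      rw [Real.inv_rpow hα.le, ← Real.rpow_neg hα.le, div_eq_mul_inv]
    have hsup := tendsto_sup.mpr ⟨hle, hgt⟩
    rw [nhdsLE_sup_nhdsGT] at hsup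
    rw [ContinuousAt, h0]
    exact hsup
  · have hcont : ContinuousAt (fun y : ℝ => y ^ (-r) * Real.exp (-t / y)) x := by
      apply ContinuousAt.mul
      · exact Real.continuousAt_rpow_const x (-r) (Or.inl hx.ne')
      · exact Real.continuous_exp.continuousAt.comp
          ((continuousAt_const.div continuousAt_id hx.ne'))
    apply hcont.congr
    filter_upwards [Ioi_mem_nhds hx] with y (hy : 0 < y)
    simp [hy]

/- Lemma 3.5 (smoothing bounds for the bi-stable semigroup): for `A` bounded self-adjoint and
`r > 0` there is `C = C(r)` such that for all `t > 0`, `T_s(t) = cfc(χ_{α>0} e^{-t/α})(A)`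
maps `H` into the range of `|A|^r = cfc(|α|^r)(A)`, with `‖|A|^{-r} T_s(t) h‖ ≤ C t^{-r} ‖h‖`
(i.e. `T_s(t) h = |A|^r w` for some `w` with `‖w‖ ≤ C t^{-r} ‖h‖`). -/
theorem stmt_10 {H : Type*} [NormedAddCommGroup H] [InnerProductSpace ℂ H] [CompleteSpace H]
    (A : H →L[ℂ] H) (hA : IsSelfAdjoint A) (r : ℝ) (hr : 0 < r) :
    ∃ C : ℝ, 0 < C ∧ ∀ t : ℝ, 0 < t → ∀ h : H,
      ∃ w : H,
        cfc (fun α : ℝ => |α| ^ r) A w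
          = cfc (fun α : ℝ => if 0 < α then Real.exp (-t / α) else 0) A h ∧
        ‖w‖ ≤ C * t ^ (-r) * ‖h‖ := by
  obtain ⟨C, hC, hCb⟩ := aux_pow_exp r hr
  refine ⟨C, hC, fun t ht h => ?_⟩
  set g : ℝ → ℝ := fun α => if 0 < α then α ^ (-r) * Real.exp (-t / α) else 0 with hgdef
  have hgc : Continuous g := aux_cont_g r t hr ht
  have habs : Continuous (fun α : ℝ => |α| ^ r) :=
    continuous_abs.rpow_const (fun x => Or.inr hr.le)
  have key : (fun α : ℝ => |α| ^ r * g α)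
      = (fun α : ℝ => if 0 < α then Real.exp (-t / α) else 0) := by
    funext α
    by_cases hα : 0 < α
    · rw [hgdef]
      simp only [if_pos hα, abs_of_pos hα, ← mul_assoc, ← Real.rpow_add hα, add_neg_cancel,
        Real.rpow_zero, one_mul]
    · rw [hgdef]; simp [hα]
  refine ⟨cfc g A h, ?_, ?_⟩
  · conv_rhs => rw [← key]
    rw [cfc_mul _ _ A habs.continuousOn hgc.continuousOn]
    rfl
  · calc ‖cfc g A h‖ ≤ ‖cfc g A‖ * ‖h‖ := (cfc g A).le_opNorm h
      _ ≤ (C * t ^ (-r)) * ‖h‖ := by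
          apply mul_le_mul_of_nonneg_right _ (norm_nonneg h)
          apply norm_cfc_le (by positivity)
          intro α _
          rw [hgdef]
          by_cases hα : 0 < α
          · simp only [if_pos hα]
            have hx := hCb (t / α) (by positivity)
            have heq : α ^ (-r) * Real.exp (-t / α)
                = t ^ (-r) * ((t / α) ^ r * Real.exp (-(t / α))) := by
              rw [Real.div_rpow ht.le hα.le, Real.rpow_neg ht.le, Real.rpow_neg hα.le, neg_div]
              have htr : (0:ℝ) < t ^ r := Real.rpow_pos_of_pos ht r
              field_simp
            rw [Real.norm_eq_abs, abs_of_nonneg (by positivity), heq]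
            have htr : (0:ℝ) ≤ t ^ (-r) := (Real.rpow_pos_of_pos ht _).le
            calc t ^ (-r) * ((t / α) ^ r * Real.exp (-(t / α))) ≤ t ^ (-r) * C :=
                  mul_le_mul_of_nonneg_left hx htr
              _ = C * t ^ (-r) := mul_comm _ _
          · simp only [if_neg hα, norm_zero]
            positivity
end

section
/- Let $H = L^2(0,1)$ and define $f(t,\alpha) = \alpha^{-1/2}(|\log\alpha|+1)^{-r/2}\phi(t)$ with $\phi \in L^2(\mathbb{R})$, $\phi \ne 0$, and $1 < r \le 2$. Then $f \in L^2(\mathbb{R}; H)$, but the function $\sigma \mapsto \left(\int_\mathbb{R}\int_0^1 (\alpha^{-1}e^{-\sigma/\alpha} f(t-\sigma,\alpha))^2\,d\alpha\,dt\right)^{1/2}$ is not integrable on $(0,\infty)$: it is bounded below by $c\,\sigma^{-1}(|\log\sigma|+1)^{-r/2}$ as $\sigma\to 0^+$. -/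
open MeasureTheory Set
open scoped ENNReal

/- The counterexample of Appendix B: `H = L²(0,1)`, `f(t,α) = α^{-1/2}(|log α|+1)^{-r/2} φ(t)`. -/
noncomputable def counterF (r : ℝ) (φ : ℝ → ℝ) (t α : ℝ) : ℝ :=
  α ^ (-(1:ℝ)/2) * (|Real.log α| + 1) ^ (-r/2) * φ t

lemma aux_sq_rpow {x : ℝ} (hx : 0 ≤ x) (p : ℝ) : (x ^ p)^2 = x ^ (p*2) := by
  rw [← Real.rpow_natCast (x ^ p) 2, ← Real.rpow_mul hx]
  norm_num

lemma aux_exists_ofReal_le {x : ℝ≥0∞} (hx : x ≠ 0) : ∃ d : ℝ, 0 < d ∧ ENNReal.ofReal d ≤ x := by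
  rcases eq_or_ne x ⊤ with h | h
  · exact ⟨1, one_pos, by simp [h]⟩
  · exact ⟨x.toReal, ENNReal.toReal_pos hx h, by rw [ENNReal.ofReal_toReal h]⟩

lemma aux_setLIntegral_mono {s : Set ℝ} (hs : MeasurableSet s) {f g : ℝ → ℝ≥0∞}
    (h : ∀ x ∈ s, f x ≤ g x) : ∫⁻ x in s, f x ≤ ∫⁻ x in s, g x :=
  lintegral_mono_ae ((ae_restrict_iff' hs).2 (Filter.Eventually.of_forall h))

lemma aux_lintegral_ofReal_eq_top {f : ℝ → ℝ} {s : Set ℝ} (hm : Measurable f)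
    (hs : MeasurableSet s) (h0 : ∀ x ∈ s, 0 ≤ f x) (hni : ¬ IntegrableOn f s volume) :
    ∫⁻ x in s, ENNReal.ofReal (f x) = ⊤ := by
  by_contra h
  apply hni
  have hae : 0 ≤ᵐ[volume.restrict s] f :=
    (ae_restrict_iff' hs).2 (Filter.Eventually.of_forall h0)
  exact ⟨hm.aestronglyMeasurable, (hasFiniteIntegral_iff_ofReal hae).2 (lt_top_iff_ne_top.2 h)⟩

lemma aux_subst (ρ : ℝ) (U : ℝ) (hU : 0 ≤ U) :
    ∫⁻ x in Set.Ioo (0:ℝ) (Real.exp (-U)), ENNReal.ofReal (x⁻¹ * (|Real.log x| + 1) ^ (-ρ)) =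
      ∫⁻ u in Set.Ioi U, ENNReal.ofReal ((u + 1) ^ (-ρ)) := by
  have himg : (fun u : ℝ => Real.exp (-u)) '' Set.Ioi U = Set.Ioo 0 (Real.exp (-U)) := by
    ext x
    simp only [mem_image, mem_Ioi, mem_Ioo]
    constructor
    · rintro ⟨u, hu, rfl⟩
      exact ⟨Real.exp_pos _, Real.exp_lt_exp.2 (by linarith)⟩
    · rintro ⟨hx0, hx1⟩
      refine ⟨-Real.log x, ?_, by rw [neg_neg, Real.exp_log hx0]⟩
      have := (Real.log_lt_iff_lt_exp hx0).2 hx1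
      linarith
  have hderiv : ∀ u ∈ Set.Ioi U,
      HasDerivWithinAt (fun u : ℝ => Real.exp (-u)) (-Real.exp (-u)) (Set.Ioi U) u := by
    intro u _
    have h : HasDerivAt (fun u : ℝ => Real.exp (-u)) (Real.exp (-u) * (-1)) u :=
      (Real.hasDerivAt_exp (-u)).comp u (hasDerivAt_neg u)
    simpa [mul_neg_one] using h.hasDerivWithinAt
  have hinj : Set.InjOn (fun u : ℝ => Real.exp (-u)) (Set.Ioi U) :=
    (Real.exp_injective.comp neg_injective).injOn
  have hsub := MeasureTheory.lintegral_image_eq_lintegral_abs_det_fderiv_mul volume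
    measurableSet_Ioi (f' := fun u : ℝ => ContinuousLinearMap.smulRight
      (1 : ℝ →L[ℝ] ℝ) (-Real.exp (-u)))
    (fun u hu => (hderiv u hu).hasFDerivWithinAt) hinj
    (fun x => ENNReal.ofReal (x⁻¹ * (|Real.log x| + 1) ^ (-ρ)))
  simp only [ContinuousLinearMap.det_smulRight, ContinuousLinearMap.one_apply, one_mul] at hsub
  rw [← himg, hsub]
  refine setLIntegral_congr_fun measurableSet_Ioi (fun u hu => ?_)
  have hu0 : 0 < u := lt_of_le_of_lt hU hu
  rw [abs_neg, Real.abs_exp, Real.log_exp, abs_neg, abs_of_pos hu0,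
    ← ENNReal.ofReal_mul (Real.exp_nonneg _)]
  congr 1
  rw [Real.exp_neg, inv_inv, ← mul_assoc, inv_mul_cancel₀ (ne_of_gt (Real.exp_pos u)), one_mul]

lemma aux_K_lt_top {r : ℝ} (hr1 : 1 < r) :
    ∫⁻ x in Set.Ioo (0:ℝ) 1, ENNReal.ofReal (x⁻¹ * (|Real.log x| + 1) ^ (-r)) < ⊤ := by
  have h1 : Set.Ioo (0:ℝ) 1 = Set.Ioo 0 (Real.exp (-0)) := by norm_num [Real.exp_zero]
  rw [h1, aux_subst r 0 le_rfl]
  have hsplit : Set.Ioi (0:ℝ) = Set.Ioc 0 1 ∪ Set.Ioi 1 := (Set.Ioc_union_Ioi_eq_Ioi zero_le_one).symm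
  rw [hsplit, lintegral_union measurableSet_Ioi (Set.Ioc_disjoint_Ioi le_rfl)]
  have hA : ∫⁻ u in Set.Ioc (0:ℝ) 1, ENNReal.ofReal ((u + 1) ^ (-r)) ≤ 1 := by
    calc ∫⁻ u in Set.Ioc (0:ℝ) 1, ENNReal.ofReal ((u + 1) ^ (-r))
        ≤ ∫⁻ _ in Set.Ioc (0:ℝ) 1, 1 := by
          refine aux_setLIntegral_mono measurableSet_Ioc fun u hu => ?_
          exact ENNReal.ofReal_le_one.2
            (Real.rpow_le_one_of_one_le_of_nonpos (by linarith [hu.1]) (by linarith))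
      _ = 1 := by simp [Real.volume_Ioc]
  have hB : ∫⁻ u in Set.Ioi (1:ℝ), ENNReal.ofReal ((u + 1) ^ (-r)) < ⊤ := by
    have hint : IntegrableOn (fun x : ℝ => x ^ (-r)) (Set.Ioi 1) volume :=
      integrableOn_Ioi_rpow_of_lt (by linarith) one_pos
    calc ∫⁻ u in Set.Ioi (1:ℝ), ENNReal.ofReal ((u + 1) ^ (-r))
        ≤ ∫⁻ u in Set.Ioi (1:ℝ), ENNReal.ofReal (u ^ (-r)) := by
          refine aux_setLIntegral_mono measurableSet_Ioi fun u hu => ?_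
          have hu1 : (1:ℝ) < u := hu
          refine ENNReal.ofReal_le_ofReal ?_
          exact Real.antitoneOn_rpow_Ioi_of_exponent_nonpos (by linarith)
            (by simp; linarith) (by simp; linarith) (by linarith)
      _ < ⊤ := hint.lintegral_lt_top
  calc _ ≤ (1:ℝ≥0∞) + ∫⁻ u in Set.Ioi (1:ℝ), ENNReal.ofReal ((u + 1) ^ (-r)) := add_le_add_left hA _
    _ < ⊤ := ENNReal.add_lt_top.2 ⟨ENNReal.one_lt_top, hB⟩

lemma aux_div_top {r : ℝ} (hr1 : 1 < r) (hr2 : r ≤ 2) :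
    ∫⁻ x in Set.Ioo (0:ℝ) (1/4 : ℝ), ENNReal.ofReal (x⁻¹ * (|Real.log x| + 1) ^ (-(r/2))) = ⊤ := by
  have h14 : Real.exp (-Real.log 4) = 1/4 := by
    rw [Real.exp_neg, Real.exp_log (by norm_num)]
    norm_num
  rw [← h14, aux_subst (r/2) (Real.log 4) (Real.log_nonneg (by norm_num))]
  rw [eq_top_iff]
  have h24 : Real.log 4 ≤ 2 := by
    rw [Real.log_le_iff_le_exp (by norm_num)]
    have h := Real.exp_one_gt_d9
    have : Real.exp 2 = Real.exp 1 * Real.exp 1 := by rw [← Real.exp_add]; norm_num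
    nlinarith
  have htop : ∫⁻ u in Set.Ioi (2:ℝ), ENNReal.ofReal (u ^ (-(r/2))) = ⊤ := by
    refine aux_lintegral_ofReal_eq_top (by fun_prop) measurableSet_Ioi
      (fun u hu => Real.rpow_nonneg (by linarith [mem_Ioi.1 hu]) _) ?_
    intro hint
    have := (integrableOn_Ioi_rpow_iff two_pos).1 hint
    linarith
  calc (⊤ : ℝ≥0∞) = ENNReal.ofReal ((2:ℝ) ^ (-(r/2))) * ∫⁻ u in Set.Ioi (2:ℝ), ENNReal.ofReal (u ^ (-(r/2))) := by
        rw [htop, ENNReal.mul_top]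
        simp only [ne_eq, ENNReal.ofReal_eq_zero, not_le]
        positivity
    _ = ∫⁻ u in Set.Ioi (2:ℝ), ENNReal.ofReal ((2:ℝ) ^ (-(r/2)) * u ^ (-(r/2))) := by
        rw [← lintegral_const_mul' _ _ ENNReal.ofReal_ne_top]
        refine setLIntegral_congr_fun measurableSet_Ioi (fun u hu => ?_)
        rw [ENNReal.ofReal_mul (Real.rpow_nonneg (by norm_num) _)]
    _ ≤ ∫⁻ u in Set.Ioi (2:ℝ), ENNReal.ofReal ((u + 1) ^ (-(r/2))) := by
        refine aux_setLIntegral_mono measurableSet_Ioi fun u hu => ?_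
        have hu2 : (2:ℝ) < u := hu
        refine ENNReal.ofReal_le_ofReal ?_
        rw [← Real.mul_rpow (by norm_num) (by linarith)]
        exact Real.antitoneOn_rpow_Ioi_of_exponent_nonpos (by linarith)
          (by simp; linarith) (by simp; linarith) (by linarith)
    _ ≤ ∫⁻ u in Set.Ioi (Real.log 4), ENNReal.ofReal ((u + 1) ^ (-(r/2))) :=
        lintegral_mono_set (Set.Ioi_subset_Ioi h24)

lemma aux_factor (u : ℝ → ℝ) (hu : Measurable u) (w : ℝ → ℝ) (hw : AEMeasurable w volume) :
    ∫⁻ t, ∫⁻ α in Set.Ioo (0:ℝ) 1, ENNReal.ofReal (u α * (w t)^2) ∂volume ∂volume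
      = (∫⁻ α in Set.Ioo (0:ℝ) 1, ENNReal.ofReal (u α)) * ∫⁻ t, ENNReal.ofReal ((w t)^2) := by
  have hw2 : AEMeasurable (fun t => ENNReal.ofReal ((w t)^2)) volume := by
    have h := (hw.mul hw).ennreal_ofReal
    simpa only [Pi.pow_apply, ← pow_two] using h
  have h1 : ∀ t : ℝ, ∫⁻ α in Set.Ioo (0:ℝ) 1, ENNReal.ofReal (u α * (w t)^2)
      = (∫⁻ α in Set.Ioo (0:ℝ) 1, ENNReal.ofReal (u α)) * ENNReal.ofReal ((w t)^2) := by
    intro t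
    simp_rw [ENNReal.ofReal_mul' (sq_nonneg (w t))]
    exact lintegral_mul_const'' _ hu.ennreal_ofReal.aemeasurable
  simp_rw [h1]
  exact lintegral_const_mul'' _ hw2

lemma aux_pt1 (r : ℝ) (φ : ℝ → ℝ) (t : ℝ) {α : ℝ} (hα : α ∈ Set.Ioo (0:ℝ) 1) :
    (counterF r φ t α)^2 = (α⁻¹ * (|Real.log α| + 1) ^ (-r)) * (φ t)^2 := by
  obtain ⟨h0, h1⟩ := hα
  have hb : (0:ℝ) ≤ |Real.log α| + 1 := by positivity
  have e1 : (α ^ (-(1:ℝ)/2))^2 = α⁻¹ := by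
    rw [aux_sq_rpow h0.le, show (-(1:ℝ)/2)*2 = -1 by norm_num, Real.rpow_neg_one]
  have e2 : ((|Real.log α| + 1) ^ (-r/2))^2 = (|Real.log α| + 1) ^ (-r) := by
    rw [aux_sq_rpow hb]
    congr 1
    ring
  calc (counterF r φ t α)^2
      = (α ^ (-(1:ℝ)/2))^2 * ((|Real.log α| + 1) ^ (-r/2))^2 * (φ t)^2 := by
        unfold counterF; ring
    _ = (α⁻¹ * (|Real.log α| + 1) ^ (-r)) * (φ t)^2 := by rw [e1, e2]

lemma aux_pt2 (r : ℝ) (φ : ℝ → ℝ) (σ t : ℝ) {α : ℝ} (hα : α ∈ Set.Ioo (0:ℝ) 1) :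
    (α⁻¹ * Real.exp (-σ/α) * counterF r φ t α)^2
      = (α ^ (-(3:ℝ)) * Real.exp (-(2*σ)/α) * (|Real.log α| + 1) ^ (-r)) * (φ t)^2 := by
  obtain ⟨h0, h1⟩ := hα
  have hb : (0:ℝ) ≤ |Real.log α| + 1 := by positivity
  have e1 : (α⁻¹)^2 * (α ^ (-(1:ℝ)/2))^2 = α ^ (-(3:ℝ)) := by
    rw [← Real.rpow_neg_one α, aux_sq_rpow h0.le, aux_sq_rpow h0.le, ← Real.rpow_add h0]
    norm_num
  have e2 : (Real.exp (-σ/α))^2 = Real.exp (-(2*σ)/α) := by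
    rw [← Real.exp_nat_mul]
    congr 1
    push_cast
    ring
  have e3 : ((|Real.log α| + 1) ^ (-r/2))^2 = (|Real.log α| + 1) ^ (-r) := by
    rw [aux_sq_rpow hb]
    congr 1
    ring
  calc (α⁻¹ * Real.exp (-σ/α) * counterF r φ t α)^2
      = (α⁻¹)^2 * (α ^ (-(1:ℝ)/2))^2 * (Real.exp (-σ/α))^2
          * ((|Real.log α| + 1) ^ (-r/2))^2 * (φ t)^2 := by unfold counterF; ring
    _ = _ := by rw [e1, e2, e3]

lemma aux_J_lower {r : ℝ} (hr1 : 1 < r) {σ : ℝ} (hσ : σ ∈ Set.Ioo (0:ℝ) (1/4 : ℝ)) :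
    ENNReal.ofReal ((Real.exp (-2)/8) * (σ ^ (-(2:ℝ)) * (|Real.log σ| + 1) ^ (-r)))
      ≤ ∫⁻ α in Set.Ioo (0:ℝ) 1,
          ENNReal.ofReal (α ^ (-(3:ℝ)) * Real.exp (-(2*σ)/α) * (|Real.log α| + 1) ^ (-r)) := by
  obtain ⟨hσ0, hσ4⟩ := hσ
  have hsub : Set.Ioo σ (2*σ) ⊆ Set.Ioo (0:ℝ) 1 := by
    intro α hα
    exact ⟨lt_trans hσ0 hα.1, by nlinarith [hα.2]⟩
  set L : ℝ := (2*σ) ^ (-(3:ℝ)) * Real.exp (-2) * (|Real.log σ| + 1) ^ (-r) with hL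
  have hLnn : 0 ≤ L := by positivity
  have hσ3 : σ ^ (-(3:ℝ)) * σ = σ ^ (-(2:ℝ)) := by
    rw [show (-(2:ℝ)) = -(3:ℝ) + 1 by norm_num, Real.rpow_add hσ0, Real.rpow_one]
  have h8 : (2*σ) ^ (-(3:ℝ)) = (1/8) * σ ^ (-(3:ℝ)) := by
    rw [Real.mul_rpow (by norm_num) hσ0.le]
    congr 1
    rw [show (-(3:ℝ)) = -((3:ℕ):ℝ) by norm_num, Real.rpow_neg (by norm_num), Real.rpow_natCast]
    norm_num
  have key : L * σ = (Real.exp (-2)/8) * (σ ^ (-(2:ℝ)) * (|Real.log σ| + 1) ^ (-r)) := by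
    rw [hL, h8]
    calc 1/8 * σ ^ (-(3:ℝ)) * Real.exp (-2) * (|Real.log σ| + 1) ^ (-r) * σ
        = 1/8 * (σ ^ (-(3:ℝ)) * σ) * Real.exp (-2) * (|Real.log σ| + 1) ^ (-r) := by ring
      _ = _ := by rw [hσ3]; ring
  have hpt : ∀ α ∈ Set.Ioo σ (2*σ),
      L ≤ α ^ (-(3:ℝ)) * Real.exp (-(2*σ)/α) * (|Real.log α| + 1) ^ (-r) := by
    intro α hα
    obtain ⟨hα1, hα2⟩ := hα
    have hα0 : 0 < α := lt_trans hσ0 hα1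
    have hαlt1 : α < 1 := (hsub ⟨hα1, hα2⟩).2
    have f1 : (2*σ) ^ (-(3:ℝ)) ≤ α ^ (-(3:ℝ)) :=
      Real.antitoneOn_rpow_Ioi_of_exponent_nonpos (by norm_num)
        (by simp [hα0]) (by simp; linarith) hα2.le
    have f2 : Real.exp (-2) ≤ Real.exp (-(2*σ)/α) := by
      refine Real.exp_le_exp.2 ?_
      rw [neg_div, neg_le_neg_iff, div_le_iff₀ hα0]
      linarith
    have f3 : (|Real.log σ| + 1) ^ (-r) ≤ (|Real.log α| + 1) ^ (-r) := by
      have hlogα : Real.log α < 0 := Real.log_neg hα0 hαlt1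
      have hlogσ : Real.log σ < 0 := Real.log_neg hσ0 (by linarith)
      have hmono : Real.log σ ≤ Real.log α := Real.log_le_log hσ0 hα1.le
      have habs : |Real.log α| + 1 ≤ |Real.log σ| + 1 := by
        rw [abs_of_neg hlogα, abs_of_neg hlogσ]
        linarith
      exact Real.antitoneOn_rpow_Ioi_of_exponent_nonpos (by linarith)
        (by simp; positivity) (by simp; positivity) habs
    calc L ≤ α ^ (-(3:ℝ)) * Real.exp (-(2*σ)/α) * (|Real.log σ| + 1) ^ (-r) := by
          rw [hL]
          gcongr
      _ ≤ _ := by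
          gcongr
  calc ENNReal.ofReal ((Real.exp (-2)/8) * (σ ^ (-(2:ℝ)) * (|Real.log σ| + 1) ^ (-r)))
      = ENNReal.ofReal L * ENNReal.ofReal σ := by
        rw [← ENNReal.ofReal_mul hLnn, key]
    _ = ENNReal.ofReal L * volume (Set.Ioo σ (2*σ)) := by
        rw [Real.volume_Ioo]
        congr 1
        ring_nf
    _ = ∫⁻ _ in Set.Ioo σ (2*σ), ENNReal.ofReal L := (setLIntegral_const _ _).symm
    _ ≤ ∫⁻ α in Set.Ioo σ (2*σ),
          ENNReal.ofReal (α ^ (-(3:ℝ)) * Real.exp (-(2*σ)/α) * (|Real.log α| + 1) ^ (-r)) :=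
        aux_setLIntegral_mono measurableSet_Ioo fun α hα =>
          ENNReal.ofReal_le_ofReal (hpt α hα)
    _ ≤ _ := lintegral_mono_set hsub

/- For `φ ∈ L²(ℝ)`, `φ ≠ 0`, `1 < r ≤ 2`: `f ∈ L²(ℝ;H)`, but
`σ ↦ ‖A⁻¹ T_s(σ) f(·-σ)‖_{L²(ℝ;H)} = (∫_ℝ ∫_0^1 (α⁻¹ e^{-σ/α} f(t-σ,α))² dα dt)^{1/2}`
is bounded below by `c σ⁻¹ (|log σ|+1)^{-r/2}` near `σ = 0⁺`, hence not integrable on `(0,∞)`. -/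
theorem stmt_17 (r : ℝ) (hr1 : 1 < r) (hr2 : r ≤ 2)
    (φ : ℝ → ℝ) (hφ : MemLp φ 2 (volume : Measure ℝ))
    (hφ0 : eLpNorm φ 2 (volume : Measure ℝ) ≠ 0) :
    (∫⁻ t, ∫⁻ α in Set.Ioo (0:ℝ) 1, ENNReal.ofReal ((counterF r φ t α)^2) ∂volume ∂volume) < ⊤ ∧
    (∃ c : ℝ, 0 < c ∧ ∃ σ₀ : ℝ, 0 < σ₀ ∧ ∀ σ ∈ Set.Ioo (0:ℝ) σ₀,
      ENNReal.ofReal (c * σ⁻¹ * (|Real.log σ| + 1) ^ (-r/2))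
        ≤ (∫⁻ t, ∫⁻ α in Set.Ioo (0:ℝ) 1,
            ENNReal.ofReal ((α⁻¹ * Real.exp (-σ/α) * counterF r φ (t - σ) α)^2)
              ∂volume ∂volume) ^ ((1:ℝ)/2)) ∧
    (∫⁻ σ in Set.Ioi (0:ℝ),
        (∫⁻ t, ∫⁻ α in Set.Ioo (0:ℝ) 1,
          ENNReal.ofReal ((α⁻¹ * Real.exp (-σ/α) * counterF r φ (t - σ) α)^2)
            ∂volume ∂volume) ^ ((1:ℝ)/2) ∂volume) = ⊤ := by
  have hφae : AEMeasurable φ (volume : Measure ℝ) := hφ.1.aemeasurable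
  have hpt : ∀ x : ℝ, ‖x‖ₑ ^ (2:ℝ) = ENNReal.ofReal (x^2) := by
    intro x
    rw [Real.enorm_eq_ofReal_abs, ENNReal.ofReal_rpow_of_nonneg (abs_nonneg x) (by norm_num)]
    congr 1
    rw [show (2:ℝ) = ((2:ℕ):ℝ) by norm_num, Real.rpow_natCast, sq_abs]
  set N : ℝ≥0∞ := ∫⁻ t, ENNReal.ofReal ((φ t)^2) with hNdef
  have hNeq : eLpNorm φ 2 (volume : Measure ℝ) = N ^ ((1:ℝ)/2) := by
    rw [eLpNorm_eq_lintegral_rpow_enorm_toReal (by norm_num) (by norm_num), hNdef]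
    simp only [ENNReal.toReal_ofNat]
    congr 1
    exact lintegral_congr fun t => hpt (φ t)
  have hN_ne_top : N ≠ ⊤ := by
    intro h
    have h2 := hφ.2
    rw [hNeq, h, ENNReal.top_rpow_of_pos (by norm_num)] at h2
    exact lt_irrefl _ h2
  have hN_ne_zero : N ≠ 0 := by
    intro h
    exact hφ0 (by rw [hNeq, h, ENNReal.zero_rpow_of_pos (by norm_num)])
  have hu1 : Measurable (fun α : ℝ => α⁻¹ * (|Real.log α| + 1) ^ (-r)) :=
    measurable_inv.mul
      (((by fun_prop : Measurable fun x : ℝ => x ^ (-r))).comp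
        (Real.measurable_log.abs.add_const 1))
  have hu2 : ∀ σ : ℝ, Measurable
      (fun α : ℝ => α ^ (-(3:ℝ)) * Real.exp (-(2*σ)/α) * (|Real.log α| + 1) ^ (-r)) :=
    fun σ =>
      (((by fun_prop : Measurable fun x : ℝ => x ^ (-(3:ℝ)))).mul
        (Real.measurable_exp.comp (measurable_const.div measurable_id))).mul
        (((by fun_prop : Measurable fun x : ℝ => x ^ (-r))).comp
          (Real.measurable_log.abs.add_const 1))
  -- Part 1
  have part1 : (∫⁻ t, ∫⁻ α in Set.Ioo (0:ℝ) 1,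
      ENNReal.ofReal ((counterF r φ t α)^2) ∂volume ∂volume) < ⊤ := by
    have h1 : ∀ t : ℝ, ∫⁻ α in Set.Ioo (0:ℝ) 1, ENNReal.ofReal ((counterF r φ t α)^2)
        = ∫⁻ α in Set.Ioo (0:ℝ) 1,
            ENNReal.ofReal ((α⁻¹ * (|Real.log α| + 1) ^ (-r)) * (φ t)^2) :=
      fun t => setLIntegral_congr_fun measurableSet_Ioo
        (fun α hα => by rw [aux_pt1 r φ t hα])
    simp only [h1]
    rw [aux_factor _ hu1 φ hφae]
    exact ENNReal.mul_lt_top (aux_K_lt_top hr1) (lt_top_iff_ne_top.2 hN_ne_top)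
  -- identity for the σ-dependent double integral
  have hGid : ∀ σ : ℝ, (∫⁻ t, ∫⁻ α in Set.Ioo (0:ℝ) 1,
      ENNReal.ofReal ((α⁻¹ * Real.exp (-σ/α) * counterF r φ (t - σ) α)^2) ∂volume ∂volume)
      = (∫⁻ α in Set.Ioo (0:ℝ) 1, ENNReal.ofReal
          (α ^ (-(3:ℝ)) * Real.exp (-(2*σ)/α) * (|Real.log α| + 1) ^ (-r))) * N := by
    intro σ
    have h1 : ∀ t : ℝ, ∫⁻ α in Set.Ioo (0:ℝ) 1,
        ENNReal.ofReal ((α⁻¹ * Real.exp (-σ/α) * counterF r φ (t - σ) α)^2)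
        = ∫⁻ α in Set.Ioo (0:ℝ) 1,
            ENNReal.ofReal ((α ^ (-(3:ℝ)) * Real.exp (-(2*σ)/α) * (|Real.log α| + 1) ^ (-r))
              * (φ (t - σ))^2) :=
      fun t => setLIntegral_congr_fun measurableSet_Ioo
        (fun α hα => by rw [aux_pt2 r φ σ (t - σ) hα])
    simp only [h1]
    have hφσ : AEMeasurable (fun t => φ (t - σ)) (volume : Measure ℝ) :=
      hφae.comp_quasiMeasurePreserving
        (measurePreserving_sub_right volume σ).quasiMeasurePreserving
    rw [aux_factor _ (hu2 σ) _ hφσ]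
    congr 1
    exact (measurePreserving_sub_right volume σ).lintegral_comp_emb
      (MeasurableEquiv.subRight σ).measurableEmbedding (fun t => ENNReal.ofReal ((φ t)^2))
  obtain ⟨d, hd0, hdN⟩ := aux_exists_ofReal_le (x := N ^ ((1:ℝ)/2)) (by
    simp only [ne_eq, ENNReal.rpow_eq_zero_iff, not_or]
    constructor
    · rintro ⟨h, -⟩; exact hN_ne_zero h
    · rintro ⟨h, -⟩; exact hN_ne_top h)
  have hbound : ∀ σ ∈ Set.Ioo (0:ℝ) (1/4 : ℝ),
      ENNReal.ofReal ((d * (Real.exp (-2)/8) ^ ((1:ℝ)/2)) * σ⁻¹ * (|Real.log σ| + 1) ^ (-r/2))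
        ≤ (∫⁻ t, ∫⁻ α in Set.Ioo (0:ℝ) 1,
            ENNReal.ofReal ((α⁻¹ * Real.exp (-σ/α) * counterF r φ (t - σ) α)^2)
              ∂volume ∂volume) ^ ((1:ℝ)/2) := by
    intro σ hσ
    obtain ⟨hσ0, hσ4⟩ := hσ
    rw [hGid σ, ENNReal.mul_rpow_of_nonneg _ _ (by norm_num : (0:ℝ) ≤ 1/2)]
    have hbnn : (0:ℝ) ≤ |Real.log σ| + 1 := by positivity
    have hXpos : (0:ℝ) < (Real.exp (-2)/8) * (σ ^ (-(2:ℝ)) * (|Real.log σ| + 1) ^ (-r)) := by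
      positivity
    have eB : (σ ^ (-(2:ℝ))) ^ ((1:ℝ)/2) = σ⁻¹ := by
      rw [← Real.rpow_mul hσ0.le, show (-(2:ℝ)) * (1/2) = -1 by norm_num, Real.rpow_neg_one]
    have eC : ((|Real.log σ| + 1) ^ (-r)) ^ ((1:ℝ)/2) = (|Real.log σ| + 1) ^ (-r/2) := by
      rw [← Real.rpow_mul hbnn]
      congr 1
      ring
    have hX12 : ((Real.exp (-2)/8) * (σ ^ (-(2:ℝ)) * (|Real.log σ| + 1) ^ (-r))) ^ ((1:ℝ)/2)
        = (Real.exp (-2)/8) ^ ((1:ℝ)/2) * (σ⁻¹ * (|Real.log σ| + 1) ^ (-r/2)) := by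
      rw [Real.mul_rpow (by positivity) (by positivity),
        Real.mul_rpow (by positivity) (by positivity), eB, eC]
    calc ENNReal.ofReal ((d * (Real.exp (-2)/8) ^ ((1:ℝ)/2)) * σ⁻¹ * (|Real.log σ| + 1) ^ (-r/2))
        = ENNReal.ofReal ((Real.exp (-2)/8) ^ ((1:ℝ)/2) * (σ⁻¹ * (|Real.log σ| + 1) ^ (-r/2)))
            * ENNReal.ofReal d := by
          rw [← ENNReal.ofReal_mul' hd0.le]
          congr 1
          ring
      _ ≤ (∫⁻ α in Set.Ioo (0:ℝ) 1, ENNReal.ofReal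
            (α ^ (-(3:ℝ)) * Real.exp (-(2*σ)/α) * (|Real.log α| + 1) ^ (-r))) ^ ((1:ℝ)/2)
            * N ^ ((1:ℝ)/2) := by
          refine mul_le_mul' ?_ hdN
          rw [← hX12]
          calc ENNReal.ofReal (((Real.exp (-2)/8) * (σ ^ (-(2:ℝ)) * (|Real.log σ| + 1) ^ (-r))) ^ ((1:ℝ)/2))
              = (ENNReal.ofReal ((Real.exp (-2)/8) * (σ ^ (-(2:ℝ)) * (|Real.log σ| + 1) ^ (-r)))) ^ ((1:ℝ)/2) :=
                (ENNReal.ofReal_rpow_of_pos hXpos).symm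
            _ ≤ _ := ENNReal.rpow_le_rpow (aux_J_lower hr1 ⟨hσ0, hσ4⟩) (by norm_num)
  refine ⟨part1, ⟨d * (Real.exp (-2)/8) ^ ((1:ℝ)/2), by positivity, 1/4, by norm_num, hbound⟩, ?_⟩
  rw [eq_top_iff]
  calc (⊤ : ℝ≥0∞)
      = ENNReal.ofReal (d * (Real.exp (-2)/8) ^ ((1:ℝ)/2))
          * ∫⁻ σ in Set.Ioo (0:ℝ) (1/4:ℝ),
              ENNReal.ofReal (σ⁻¹ * (|Real.log σ| + 1) ^ (-(r/2))) := by
        rw [aux_div_top hr1 hr2, ENNReal.mul_top]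
        simp only [ne_eq, ENNReal.ofReal_eq_zero, not_le]
        positivity
    _ = ∫⁻ σ in Set.Ioo (0:ℝ) (1/4:ℝ),
          ENNReal.ofReal ((d * (Real.exp (-2)/8) ^ ((1:ℝ)/2)) * σ⁻¹ * (|Real.log σ| + 1) ^ (-r/2)) := by
        rw [← lintegral_const_mul' _ _ ENNReal.ofReal_ne_top]
        refine setLIntegral_congr_fun measurableSet_Ioo
          (fun σ hσ => ?_)
        rw [← ENNReal.ofReal_mul (by positivity)]
        congr 1
        rw [neg_div]
        ring
    _ ≤ ∫⁻ σ in Set.Ioo (0:ℝ) (1/4:ℝ),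
          (∫⁻ t, ∫⁻ α in Set.Ioo (0:ℝ) 1,
            ENNReal.ofReal ((α⁻¹ * Real.exp (-σ/α) * counterF r φ (t - σ) α)^2)
              ∂volume ∂volume) ^ ((1:ℝ)/2) :=
        aux_setLIntegral_mono measurableSet_Ioo hbound
    _ ≤ _ := lintegral_mono_set fun σ hσ => hσ.1
end
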